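/- arXiv:0809.1266 — 10 statements merged into one kernel-verified Lean document; each statement's English description precedes it below -/
import Mathlib

section
/- Let n ≥ 1 be an integer, let x ∈ ℂ, let w ∈ ℂ with w ≠ 0, and let 0 < ε < |w|. Then (1/(2πi)) ∮_{|t|=ε} (e^{xt}/t)^n · (t − w)^{−1} dt = −w^{−n} · S_{n−1}(n w x). -/
/-! With `a = n x` the integrand is `e^{at} / (t^n (t - w))`, and the partial fraction decomposition
`1 / (t^n (t - w)) = w^{-n} (1 / (t - w) - ∑_{j<n} w^j / t^{j+1})` splits the integral. The first
term is holomorphic on the closed disc since `ε < |w|`, so its integral vanishes, and by Cauchy's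
formula for derivatives `e^{at} / t^{j+1}` integrates to `2πi a^j / j!`. -/

open Complex Metric Finset
open scoped Nat Real

theorem sub_inv_sub_sum_pow_div_pow_succ {K : Type*} [Field K] {t w : K} (ht : t ≠ 0)
    (htw : t ≠ w) (n : ℕ) :
    (t - w)⁻¹ - ∑ j ∈ range n, w ^ j / t ^ (j + 1) = w ^ n / (t ^ n * (t - w)) := by
  have htw' : t - w ≠ 0 := sub_ne_zero.mpr htw
  induction n with
  | zero => simp
  | succ n ih =>
    rw [sum_range_succ, ← sub_sub, ih]
    field_simp
    ring

theorem div_pow_mul_sub_eq {K : Type*} [Field K] {t w : K} (ht : t ≠ 0) (hw : w ≠ 0)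
    (htw : t ≠ w) (e : K) (n : ℕ) :
    e / (t ^ n * (t - w)) = (w ^ n)⁻¹ * (e / (t - w) - ∑ j ∈ range n, w ^ j * (e / t ^ (j + 1))) := by
  have hsum : ∑ j ∈ range n, w ^ j * (e / t ^ (j + 1)) = e * ∑ j ∈ range n, w ^ j / t ^ (j + 1) := by
    rw [mul_sum]
    exact sum_congr rfl fun j _ => by ring
  rw [hsum, div_eq_mul_inv e (t - w), ← mul_sub, sub_inv_sub_sum_pow_div_pow_succ ht htw]
  field_simp

theorem circleIntegral_exp_mul_div_sub_center_pow (a c : ℂ) {R : ℝ} (hR : 0 < R) (j : ℕ) :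
    ∮ z in C(c, R), exp (a * z) / (z - c) ^ (j + 1) = 2 * π * I * a ^ j * exp (a * c) / j ! := by
  have h := (differentiable_exp.comp (differentiable_id.const_mul a)).differentiableOn
    |>.circleIntegral_one_div_sub_center_pow_smul (c := c) hR j
  simp only [iteratedDeriv_cexp_const_mul, smul_eq_mul, Function.comp_def, id] at h
  rw [circleIntegral.integral_congr hR.le fun z _ => (one_div_mul_eq_div _ _).symm, h]
  ring

theorem circleIntegral_exp_mul_div_sub_eq_zero (a : ℂ) {c w : ℂ} {R : ℝ} (hR : 0 ≤ R)
    (hw : w ∉ closedBall c R) : ∮ z in C(c, R), exp (a * z) / (z - w) = 0 := by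
  have hne : ∀ z ∈ closedBall c R, z - w ≠ 0 := fun z hz h => hw (sub_eq_zero.mp h ▸ hz)
  refine circleIntegral_eq_zero_of_differentiable_on_off_countable hR Set.countable_empty
    (by fun_prop (disch := assumption)) fun z hz => ?_
  have := hne z (ball_subset_closedBall hz.1)
  fun_prop (disch := assumption)

theorem stmt_0_general (n : ℕ) (x w : ℂ) (hw : w ≠ 0)
    (ε : ℝ) (hε : 0 < ε) (hεw : ε < ‖w‖) :
    (1 / (2 * (Real.pi : ℂ) * Complex.I)) *
        (∮ t in C(0, ε), (Complex.exp (x * t) / t) ^ n * (t - w)⁻¹) =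
      -(w ^ (-(n : ℤ)) *
        ∑ k ∈ Finset.range n, ((n : ℂ) * w * x) ^ k / (Nat.factorial k : ℂ)) := by
  set a : ℂ := n * x
  have hw_out : w ∉ closedBall (0 : ℂ) ε := by simpa using hεw.not_ge
  have ht0 : ∀ t ∈ sphere (0 : ℂ) ε, t ≠ 0 := fun t ht => ne_of_mem_sphere ht hε.ne'
  have htw : ∀ t ∈ sphere (0 : ℂ) ε, t - w ≠ 0 := fun t ht h =>
    hw_out (sub_eq_zero.mp h ▸ sphere_subset_closedBall ht)
  have hpf : Set.EqOn (fun t => (exp (x * t) / t) ^ n * (t - w)⁻¹)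
      (fun t => (w ^ n)⁻¹ * (exp (a * t) / (t - w) -
        ∑ j ∈ range n, w ^ j * (exp (a * t) / t ^ (j + 1)))) (sphere 0 ε) := by
    intro t ht
    dsimp only
    rw [div_pow, ← div_eq_mul_inv, div_div, ← exp_nat_mul, ← mul_assoc]
    exact div_pow_mul_sub_eq (ht0 t ht) hw (sub_ne_zero.mp (htw t ht)) _ n
  have hI₁ : CircleIntegrable (fun t => exp (a * t) / (t - w)) 0 ε :=
    ContinuousOn.circleIntegrable hε.le (by fun_prop (disch := exact htw))
  have hI₂ : ∀ j, CircleIntegrable (fun t => w ^ j * (exp (a * t) / t ^ (j + 1))) 0 ε := fun j =>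
    ContinuousOn.circleIntegrable hε.le
      (by fun_prop (disch := exact fun t ht => pow_ne_zero _ (ht0 t ht)))
  have hcauchy (j : ℕ) : ∮ t in C(0, ε), exp (a * t) / t ^ (j + 1) = 2 * π * I * a ^ j / j ! := by
    simpa using circleIntegral_exp_mul_div_sub_center_pow a 0 hε j
  rw [circleIntegral.integral_congr hε.le hpf, circleIntegral.integral_const_mul,
    circleIntegral.integral_sub hI₁ (CircleIntegrable.fun_sum _ fun j _ => hI₂ j),
    circleIntegral_exp_mul_div_sub_eq_zero _ hε.le hw_out,
    circleIntegral.integral_fun_sum fun j _ => hI₂ j]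
  simp_rw [circleIntegral.integral_const_mul, hcauchy]
  rw [zero_sub, zpow_neg, zpow_natCast, mul_neg, mul_neg, mul_sum, mul_sum, mul_sum]
  refine congrArg Neg.neg (sum_congr rfl fun j _ => ?_)
  field_simp
  ring

/-- For `n ≥ 1`, `x ∈ ℂ`, `w ≠ 0` and `0 < ε < |w|`,
`(1/(2πi)) ∮_{|t|=ε} (e^{xt}/t)^n (t − w)⁻¹ dt = −w^{−n} S_{n−1}(n w x)`,
where `S_{n−1}(z) = ∑_{k=0}^{n−1} z^k/k!`. -/
theorem stmt_0 (n : ℕ) (hn : 1 ≤ n) (x w : ℂ) (hw : w ≠ 0)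
    (ε : ℝ) (hε : 0 < ε) (hεw : ε < ‖w‖) :
    (1 / (2 * (Real.pi : ℂ) * Complex.I)) *
        (∮ t in C(0, ε), (Complex.exp (x * t) / t) ^ n * (t - w)⁻¹) =
      -(w ^ (-(n : ℤ)) *
        ∑ k ∈ Finset.range n, ((n : ℂ) * w * x) ^ k / (Nat.factorial k : ℂ)) :=
  stmt_0_general n x w hw ε hε hεw
end

section
/- Fix α with 1/3 < α < 1/2 and let K be a compact subset of the open half-plane {w ∈ ℂ : Re w < 1}. Then there exists C > 0 such that for every integer n ≥ 1 and every w ∈ K, | S_{n−1}(n w) e^{−n w} − 1 + (w e^{1−w})^n / (√(2πn)(1−w)) | ≤ C n^{1−3α} · |(w e^{1−w})^n| / (√(2πn) |1−w|). -/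
/-!
Along the segment `t ↦ t w`, the function
`F(z) = S_{n-1}(nz) e^{-nz} + (nⁿ/n!) (z e^{-z})ⁿ / (1 - z)` has derivative
`(nⁿ/n!) (z e^{-z})ⁿ / (1 - z)²`, and `F(0) = 1`; so the error, with `nⁿ/n!` in place of
`eⁿ/√(2πn)`, is an integral over `[0, 1]`. If `Re w ≤ 1 - ε`, then
`|t w e^{-tw}| ≤ |w e^{-w}| e^{-ε(1-t)}`, and the integral is `O(|w e^{-w}|ⁿ / n)`.
Stirling's formula with Robbins' bound replaces `nⁿ/n!` by `eⁿ/√(2πn)` at a relative cost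
`O(1/n)`. The error is therefore `O(1/n)` uniformly on `K`, and `1/n ≤ n^{1-3α}` since
`α < 2/3`.
-/

open Real Filter Topology Finset
open scoped Nat

namespace Stirling

theorem stirlingSeq_le_sqrt_pi_mul_exp {n : ℕ} (hn : n ≠ 0) :
    stirlingSeq n ≤ √π * exp (1 / (12 * n)) := by
  -- Robbins' bound makes `g` increasing on `m ≥ 1`; its limit is `log √π`.
  set g : ℕ → ℝ := fun m => log (stirlingSeq m) - 1 / (12 * m)
  have hmono : Monotone (g ∘ Nat.succ) := monotone_nat_of_le_succ fun k => by
    have hstep := log_stirlingSeq_sdiff_le (k + 1)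
    have htel : 1 / (12 * ((k + 1 : ℕ) : ℝ) * ((k + 1 : ℕ) + 1)) =
        1 / (12 * ((k + 1 : ℕ) : ℝ)) - 1 / (12 * ((k + 1 + 1 : ℕ) : ℝ)) := by
      push_cast; field_simp; ring
    simp only [Function.comp_apply, g]
    linarith
  have hlim : Tendsto g atTop (𝓝 (log √π - 0)) := by
    refine ((continuousAt_log (by positivity)).tendsto.comp tendsto_stirlingSeq_sqrt_pi).sub ?_
    exact (tendsto_const_div_atTop_nhds_zero_nat (1 / 12 : ℝ)).congr fun m => div_div _ _ _
  obtain ⟨k, rfl⟩ := Nat.exists_eq_succ_of_ne_zero hn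
  have hle : g (k + 1) ≤ log √π - 0 :=
    hmono.ge_of_tendsto (hlim.comp (tendsto_add_atTop_nat 1)) k
  rw [← log_le_log_iff (stirlingSeq'_pos k) (by positivity),
    log_mul (by positivity) (by positivity), log_exp]
  simp only [g] at hle
  linarith

theorem pow_div_factorial_eq (n : ℕ) (hn : n ≠ 0) :
    (n : ℝ) ^ n / n ! = exp n / √(2 * π * n) * (√π / stirlingSeq n) := by
  have hsqrt : √(2 * π * n) = √π * √(2 * n) := by rw [← sqrt_mul (by positivity)]; ring_nf
  have hn' : (0 : ℝ) < n := by positivity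
  rw [stirlingSeq, hsqrt, ← exp_one_pow, div_pow]
  field_simp

theorem pow_div_factorial_le (n : ℕ) (hn : n ≠ 0) :
    (n : ℝ) ^ n / n ! ≤ exp n / √(2 * π * n) := by
  rw [pow_div_factorial_eq n hn]
  refine mul_le_of_le_one_right (by positivity) ((div_le_one ?_).2 (sqrt_pi_le_stirlingSeq hn))
  exact (sqrt_pos.2 pi_pos).trans_le (sqrt_pi_le_stirlingSeq hn)

theorem exp_div_sqrt_sub_pow_div_factorial_le (n : ℕ) (hn : n ≠ 0) :
    exp n / √(2 * π * n) - (n : ℝ) ^ n / n ! ≤ exp n / √(2 * π * n) / n := by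
  have hupper := stirlingSeq_le_sqrt_pi_mul_exp hn
  have hpos : 0 < stirlingSeq n := (sqrt_pos.2 pi_pos).trans_le (sqrt_pi_le_stirlingSeq hn)
  have hρ : exp (-(1 / (12 * n))) ≤ √π / stirlingSeq n := by
    rw [le_div_iff₀ hpos, exp_neg, inv_mul_le_iff₀ (exp_pos _)]
    linarith
  have hone_sub : 1 - 1 / n ≤ exp (-(1 / (12 * n))) := by
    have hexp := add_one_le_exp (-(1 / (12 * (n : ℝ))))
    have hle : 1 / (12 * (n : ℝ)) ≤ 1 / n := by gcongr; linarith
    linarith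
  rw [pow_div_factorial_eq n hn, ← mul_one_sub, div_eq_mul_one_div _ (n : ℝ)]
  exact mul_le_mul_of_nonneg_left (by linarith) (by positivity)

end Stirling

theorem hasDerivAt_sum_pow_div_factorial_mul_exp_neg (n : ℕ) (z : ℂ) :
    HasDerivAt (fun z : ℂ => (∑ k ∈ range (n + 1), z ^ k / (k ! : ℂ)) * Complex.exp (-z))
      (-(z ^ n / (n ! : ℂ)) * Complex.exp (-z)) z := by
  induction n with
  | zero => simpa using (hasDerivAt_neg z).cexp
  | succ n ih =>
    simp_rw [sum_range_succ _ (n + 1), add_mul]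
    have hterm : HasDerivAt (fun z : ℂ => z ^ (n + 1) / ((n + 1)! : ℂ) * Complex.exp (-z))
        ((z ^ n / (n ! : ℂ) - z ^ (n + 1) / ((n + 1)! : ℂ)) * Complex.exp (-z)) z := by
      refine (((hasDerivAt_pow (n + 1) z).div_const ((n + 1)! : ℂ)).fun_mul
        (hasDerivAt_neg z).cexp).congr_deriv ?_
      rw [Nat.factorial_succ]
      push_cast
      field_simp
      ring
    exact (ih.fun_add hterm).congr_deriv (by ring)

theorem hasDerivAt_sum_mul_exp_add_pow_div_one_sub (n : ℕ) {z : ℂ} (hz : z ≠ 1) :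
    HasDerivAt (fun z => (∑ k ∈ range n, ((n : ℂ) * z) ^ k / (k ! : ℂ)) *
        Complex.exp (-(n : ℂ) * z) +
          (n : ℂ) ^ n / (n ! : ℂ) * (z * Complex.exp (-z)) ^ n / (1 - z))
      ((n : ℂ) ^ n / (n ! : ℂ) * (z * Complex.exp (-z)) ^ n / (1 - z) ^ 2) z := by
  have hz' : 1 - z ≠ 0 := sub_ne_zero.2 hz.symm
  have hquot := (((hasDerivAt_id z).fun_mul (hasDerivAt_neg z).cexp).fun_pow n).fun_div
    ((hasDerivAt_const z (1 : ℂ)).fun_sub (hasDerivAt_id z)) hz'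
  cases n with
  | zero => simpa using hquot
  | succ m =>
    have hsum := (hasDerivAt_sum_pow_div_factorial_mul_exp_neg m _).comp z
      ((hasDerivAt_id z).const_mul ((m + 1 : ℕ) : ℂ))
    have key := hsum.fun_add (hquot.const_mul (((m + 1 : ℕ) : ℂ) ^ (m + 1) / ((m + 1)! : ℂ)))
    simp only [Function.comp_def, id, ← mul_div_assoc, ← neg_mul] at key
    refine key.congr_deriv ?_
    have hexp : Complex.exp (-((m + 1 : ℕ) : ℂ) * z) = Complex.exp (-z) ^ (m + 1) := by
      rw [← Complex.exp_nat_mul]; ring_nf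
    rw [hexp, Nat.factorial_succ, Nat.add_sub_cancel]
    push_cast
    simp only [mul_pow]
    field_simp
    ring

noncomputable def szegoIntegrand (n : ℕ) (w : ℂ) (t : ℝ) : ℂ :=
  ((t : ℂ) * w * Complex.exp (-(t * w))) ^ n * w / (1 - t * w) ^ 2

theorem le_re_one_sub_ofReal_mul {w : ℂ} {ε t : ℝ} (hε : ε ≤ 1) (hw : w.re ≤ 1 - ε)
    (ht : t ∈ Set.Icc (0 : ℝ) 1) : ε ≤ (1 - t * w).re := by
  simp only [Complex.sub_re, Complex.one_re, Complex.re_ofReal_mul]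
  nlinarith [ht.1, ht.2]

theorem ofReal_mul_ne_one {w : ℂ} (hw : w.re < 1) {t : ℝ} (ht : t ∈ Set.Icc (0 : ℝ) 1) :
    (t : ℂ) * w ≠ 1 := by
  intro h
  have hre := le_re_one_sub_ofReal_mul (min_le_left 1 (1 - w.re))
    (by linarith [min_le_right 1 (1 - w.re)]) ht
  rw [h, sub_self, Complex.zero_re] at hre
  exact (lt_min one_pos (by linarith)).not_ge hre

theorem sum_mul_exp_sub_one_add_eq_integral (n : ℕ) {w : ℂ} (hw : w.re < 1) :
    (∑ k ∈ range n, ((n : ℂ) * w) ^ k / (k ! : ℂ)) * Complex.exp (-(n : ℂ) * w) - 1 +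
        (n : ℂ) ^ n / (n ! : ℂ) * (w * Complex.exp (-w)) ^ n / (1 - w) =
      (n : ℂ) ^ n / (n ! : ℂ) *
        ∫ t in (0 : ℝ)..1, szegoIntegrand n w t := by
  set F : ℂ → ℂ := fun z => (∑ k ∈ range n, ((n : ℂ) * z) ^ k / (k ! : ℂ)) *
    Complex.exp (-(n : ℂ) * z) +
      (n : ℂ) ^ n / (n ! : ℂ) * (z * Complex.exp (-z)) ^ n / (1 - z)
  have hline : ∀ t : ℝ, HasDerivAt (fun t : ℝ => (t : ℂ) * w) w t := fun t => by
    simpa using (hasDerivAt_id t).ofReal_comp.mul_const w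
  have hderiv : ∀ t ∈ Set.uIcc (0 : ℝ) 1, HasDerivAt (fun t : ℝ => F (t * w))
      ((n : ℂ) ^ n / (n ! : ℂ) * szegoIntegrand n w t) t := by
    intro t ht
    rw [Set.uIcc_of_le zero_le_one] at ht
    refine ((hasDerivAt_sum_mul_exp_add_pow_div_one_sub n (ofReal_mul_ne_one hw ht)).comp t
      (hline t)).congr_deriv ?_
    simp only [szegoIntegrand]
    ring
  have hcont : ContinuousOn (szegoIntegrand n w) (Set.uIcc 0 1) := by
    refine Continuous.continuousOn (by fun_prop) |>.div (Continuous.continuousOn (by fun_prop)) ?_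
    intro t ht
    rw [Set.uIcc_of_le zero_le_one] at ht
    exact pow_ne_zero 2 (sub_ne_zero.2 (ofReal_mul_ne_one hw ht).symm)
  rw [← intervalIntegral.integral_const_mul, intervalIntegral.integral_eq_sub_of_hasDerivAt hderiv
    (hcont.intervalIntegrable.const_mul _)]
  have hF0 : F 0 = 1 := by cases n <;> simp [F, sum_range_succ']
  simp only [Complex.ofReal_one, one_mul, Complex.ofReal_zero, zero_mul, hF0, F]
  ring

theorem integral_exp_mul_sub_self_le {a : ℝ} (ha : 0 < a) :
    ∫ t in (0 : ℝ)..1, Real.exp (a * t - a) ≤ 1 / a := by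
  rw [intervalIntegral.integral_comp_mul_sub (fun x => Real.exp x) ha.ne', integral_exp,
    smul_eq_mul]
  simp only [mul_zero, mul_one, zero_sub, sub_self, Real.exp_zero, one_div]
  exact mul_le_of_le_one_right (inv_nonneg.2 ha.le) (by linarith [Real.exp_pos (-a)])

theorem norm_ofReal_mul_mul_exp_neg_le {w : ℂ} {ε t : ℝ} (hw : w.re ≤ 1 - ε)
    (ht : t ∈ Set.Icc (0 : ℝ) 1) :
    ‖(t : ℂ) * w * Complex.exp (-(t * w))‖ ≤
      ‖w * Complex.exp (-w)‖ * Real.exp (ε * (t - 1)) := by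
  have hnorm :
      ‖(t : ℂ) * w * Complex.exp (-(t * w))‖ = ‖w‖ * (t * Real.exp (-(t * w.re))) := by
    simp [Complex.norm_exp, abs_of_nonneg ht.1]
    ring
  rw [hnorm, norm_mul, Complex.norm_exp, Complex.neg_re, mul_assoc]
  refine mul_le_mul_of_nonneg_left ?_ (norm_nonneg w)
  calc t * Real.exp (-(t * w.re)) ≤ Real.exp (t - 1) * Real.exp (-(t * w.re)) := by
        gcongr; linarith [Real.add_one_le_exp (t - 1)]
    _ ≤ Real.exp (-w.re) * Real.exp (ε * (t - 1)) := by
        rw [← Real.exp_add, ← Real.exp_add, Real.exp_le_exp]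
        nlinarith [ht.2]

theorem norm_szegoIntegrand_le {w : ℂ} {ε t : ℝ} (n : ℕ) (hε0 : 0 < ε) (hε1 : ε ≤ 1)
    (hw : w.re ≤ 1 - ε) (ht : t ∈ Set.Icc (0 : ℝ) 1) :
    ‖szegoIntegrand n w t‖ ≤
      ‖w * Complex.exp (-w)‖ ^ n * ‖w‖ / ε ^ 2 * Real.exp (n * ε * t - n * ε) := by
  have hden : ε ≤ ‖1 - t * w‖ :=
    (le_re_one_sub_ofReal_mul hε1 hw ht).trans (Complex.re_le_norm _)
  have hpow : ‖(t : ℂ) * w * Complex.exp (-(t * w))‖ ^ n ≤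
      ‖w * Complex.exp (-w)‖ ^ n * Real.exp (n * ε * t - n * ε) := by
    rw [show n * ε * t - n * ε = n * (ε * (t - 1)) by ring, Real.exp_nat_mul, ← mul_pow]
    exact pow_le_pow_left₀ (norm_nonneg _) (norm_ofReal_mul_mul_exp_neg_le hw ht) n
  rw [szegoIntegrand, norm_div, norm_mul, norm_pow, norm_pow, div_mul_eq_mul_div, div_le_div_iff₀
    (pow_pos (hε0.trans_le hden) 2) (pow_pos hε0 2)]
  calc ‖(t : ℂ) * w * Complex.exp (-(t * w))‖ ^ n * ‖w‖ * ε ^ 2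
      ≤ ‖w * Complex.exp (-w)‖ ^ n * Real.exp (n * ε * t - n * ε) * ‖w‖ *
          ‖1 - t * w‖ ^ 2 := by
        gcongr
    _ = _ := by ring

theorem norm_integral_szegoIntegrand_le {w : ℂ} {ε : ℝ} {n : ℕ} (hn : n ≠ 0) (hε0 : 0 < ε)
    (hε1 : ε ≤ 1) (hw : w.re ≤ 1 - ε) :
    ‖∫ t in (0 : ℝ)..1, szegoIntegrand n w t‖ ≤
      ‖w * Complex.exp (-w)‖ ^ n * ‖w‖ / (ε ^ 3 * n) := by
  have hnε : 0 < (n : ℝ) * ε := by positivity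
  calc _ ≤ ∫ t in (0 : ℝ)..1, ‖w * Complex.exp (-w)‖ ^ n * ‖w‖ / ε ^ 2 *
          Real.exp (n * ε * t - n * ε) :=
        intervalIntegral.norm_integral_le_of_norm_le zero_le_one
          (Eventually.of_forall fun t ht =>
            norm_szegoIntegrand_le n hε0 hε1 hw (Set.Ioc_subset_Icc_self ht))
          (Continuous.intervalIntegrable (by fun_prop) 0 1)
    _ ≤ ‖w * Complex.exp (-w)‖ ^ n * ‖w‖ / ε ^ 2 * (1 / (n * ε)) := by
        rw [intervalIntegral.integral_const_mul]
        exact mul_le_mul_of_nonneg_left (integral_exp_mul_sub_self_le hnε) (by positivity)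
    _ = _ := by field_simp

theorem mul_exp_one_sub_pow (w : ℂ) (n : ℕ) :
    (w * Complex.exp (1 - w)) ^ n = (Real.exp n : ℂ) * (w * Complex.exp (-w)) ^ n := by
  rw [Complex.ofReal_exp, Complex.ofReal_natCast, sub_eq_add_neg, Complex.exp_add,
    ← mul_one (n : ℂ), Complex.exp_nat_mul]
  ring

theorem norm_sum_mul_exp_sub_one_add_le {w : ℂ} {ε : ℝ} {n : ℕ} (hn : n ≠ 0) (hε0 : 0 < ε)
    (hε1 : ε ≤ 1) (hw : w.re ≤ 1 - ε) :
    ‖(∑ k ∈ range n, ((n : ℂ) * w) ^ k / (k ! : ℂ)) * Complex.exp (-(n : ℂ) * w) - 1 +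
        (w * Complex.exp (1 - w)) ^ n / ((√(2 * π * n) : ℂ) * (1 - w))‖ ≤
      (‖w‖ * ‖1 - w‖ / ε ^ 3 + 1) / n *
        (‖(w * Complex.exp (1 - w)) ^ n‖ / (√(2 * π * n) * ‖1 - w‖)) := by
  have hw1 : w.re < 1 := by linarith
  have hD : 0 < ‖1 - w‖ := norm_pos_iff.2 (sub_ne_zero.2 fun h => by simp [← h] at hw1)
  have hQ : 0 < √(2 * π * n) := by positivity
  set a := Real.exp n / √(2 * π * n)
  set c := (n : ℝ) ^ n / (n ! : ℝ)
  set I := ∫ t in (0 : ℝ)..1, szegoIntegrand n w t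
  set E := (w * Complex.exp (-w)) ^ n / (1 - w)
  have hc : (n : ℂ) ^ n / (n ! : ℂ) = c := by simp [c]
  have hdecomp :
      (∑ k ∈ range n, ((n : ℂ) * w) ^ k / (k ! : ℂ)) * Complex.exp (-(n : ℂ) * w) - 1 +
        (w * Complex.exp (1 - w)) ^ n / ((√(2 * π * n) : ℂ) * (1 - w)) =
      c * I + (a - c : ℝ) * E := by
    have hid := sum_mul_exp_sub_one_add_eq_integral n hw1
    rw [hc] at hid
    rw [mul_exp_one_sub_pow, ← hid]
    simp only [a, E, Complex.ofReal_sub, Complex.ofReal_div]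
    have : (√(2 * π * n) : ℂ) ≠ 0 := by exact_mod_cast hQ.ne'
    field_simp
    ring
  have hac : |a - c| ≤ a / n := abs_sub_le_iff.2
    ⟨Stirling.exp_div_sqrt_sub_pow_div_factorial_le n hn, by
      linarith [Stirling.pow_div_factorial_le n hn, show 0 ≤ a / n by positivity]⟩
  have hc0 : 0 ≤ c := by positivity
  rw [hdecomp, mul_exp_one_sub_pow, norm_mul, Complex.norm_real,
    Real.norm_of_nonneg (Real.exp_pos _).le]
  calc ‖(c : ℂ) * I + ((a - c : ℝ) : ℂ) * E‖ ≤ c * ‖I‖ + |a - c| * ‖E‖ := by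
        refine (norm_add_le _ _).trans_eq ?_
        rw [norm_mul, norm_mul, Complex.norm_real, Complex.norm_real, Real.norm_of_nonneg hc0,
          Real.norm_eq_abs]
    _ ≤ a * (‖w * Complex.exp (-w)‖ ^ n * ‖w‖ / (ε ^ 3 * n)) + a / n * ‖E‖ := by
        gcongr
        · exact Stirling.pow_div_factorial_le n hn
        · exact norm_integral_szegoIntegrand_le hn hε0 hε1 hw
    _ = _ := by
        simp only [E, a, norm_div, norm_pow]
        field_simp

theorem exists_norm_sum_mul_exp_sub_one_add_le_of_isCompact {K : Set ℂ} (hK : IsCompact K)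
    (hKre : ∀ w ∈ K, w.re < 1) :
    ∃ C > 0, ∀ n : ℕ, n ≠ 0 → ∀ w ∈ K,
      ‖(∑ k ∈ range n, ((n : ℂ) * w) ^ k / (k ! : ℂ)) * Complex.exp (-(n : ℂ) * w) - 1 +
          (w * Complex.exp (1 - w)) ^ n / ((√(2 * π * n) : ℂ) * (1 - w))‖ ≤
        C / n * (‖(w * Complex.exp (1 - w)) ^ n‖ / (√(2 * π * n) * ‖1 - w‖)) := by
  obtain ⟨δ, hδ, hδK⟩ := hK.exists_forall_le' (f := fun w : ℂ => 1 - w.re) (by fun_prop)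
    fun w hw => sub_pos.2 (hKre w hw)
  obtain ⟨R, hR, hRK⟩ := hK.isBounded.exists_pos_norm_le
  set ε := min 1 δ
  have hε : 0 < ε := lt_min one_pos hδ
  refine ⟨R * (1 + R) / ε ^ 3 + 1, by positivity, fun n hn w hw => ?_⟩
  have hwre : w.re ≤ 1 - ε := by linarith [hδK w hw, min_le_right 1 δ]
  have hw1 : ‖1 - w‖ ≤ 1 + R := (norm_sub_le _ _).trans (by simpa using hRK w hw)
  refine (norm_sum_mul_exp_sub_one_add_le hn hε (min_le_left 1 δ) hwre).trans ?_
  gcongr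
  exact hRK w hw

theorem stmt_2_general (α : ℝ) (hα2 : α < 1 / 2)
    (K : Set ℂ) (hK : IsCompact K) (hKre : ∀ w ∈ K, w.re < 1) :
    ∃ C > 0, ∀ n : ℕ, 1 ≤ n → ∀ w ∈ K,
      ‖(∑ k ∈ Finset.range n, ((n : ℂ) * w) ^ k / (Nat.factorial k : ℂ)) *
            Complex.exp (-(n : ℂ) * w) - 1 +
          (w * Complex.exp (1 - w)) ^ n /
            ((Real.sqrt (2 * Real.pi * n) : ℂ) * (1 - w))‖ ≤
      C * (n : ℝ) ^ ((1 : ℝ) - 3 * α) *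
        ‖(w * Complex.exp (1 - w)) ^ n‖ /
          (Real.sqrt (2 * Real.pi * n) * ‖1 - w‖) := by
  obtain ⟨C, hC, hbound⟩ := exists_norm_sum_mul_exp_sub_one_add_le_of_isCompact hK hKre
  refine ⟨C, hC, fun n hn w hw => (hbound n (by omega) w hw).trans ?_⟩
  have hinv : (n : ℝ)⁻¹ ≤ (n : ℝ) ^ ((1 : ℝ) - 3 * α) := by
    rw [← Real.rpow_neg_one]
    exact Real.rpow_le_rpow_of_exponent_le (by exact_mod_cast hn) (by linarith)
  rw [mul_div_assoc, div_eq_mul_inv C]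
  gcongr

/-- Left-half plane Szegő approximation: for `1/3 < α < 1/2` and `K`
compact in `{Re w < 1}`, there is `C > 0` with
`|S_{n−1}(nw) e^{−nw} − 1 + (w e^{1−w})^n/(√(2πn)(1−w))|
  ≤ C n^{1−3α} |(w e^{1−w})^n| / (√(2πn)|1−w|)`
for all `n ≥ 1` and `w ∈ K`. -/
theorem stmt_2 (α : ℝ) (hα1 : 1 / 3 < α) (hα2 : α < 1 / 2)
    (K : Set ℂ) (hK : IsCompact K) (hKre : ∀ w ∈ K, w.re < 1) :
    ∃ C > 0, ∀ n : ℕ, 1 ≤ n → ∀ w ∈ K,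
      ‖(∑ k ∈ Finset.range n, ((n : ℂ) * w) ^ k / (Nat.factorial k : ℂ)) *
            Complex.exp (-(n : ℂ) * w) - 1 +
          (w * Complex.exp (1 - w)) ^ n /
            ((Real.sqrt (2 * Real.pi * n) : ℂ) * (1 - w))‖ ≤
      C * (n : ℝ) ^ ((1 : ℝ) - 3 * α) *
        ‖(w * Complex.exp (1 - w)) ^ n‖ /
          (Real.sqrt (2 * Real.pi * n) * ‖1 - w‖) :=
  stmt_2_general α hα2 K hK hKre
end

section
/- Fix α with 1/3 < α < 1/2 and δ > 0, and let S = {w ∈ ℂ : |w| ≥ 1 + δ}. Then there exists C > 0 such that for every integer n ≥ 1 and every w ∈ S, | S_{n−1}(n w) e^{−n w} − (w e^{1−w})^n / (√(2πn)(w − 1)) | ≤ C n^{1−3α} · |(w e^{1−w})^n| / (√(2πn) |w − 1|). -/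
/-
Integrating the binomial expansion of `(z + u)^(n-1)` against `e^{-u}` gives
`S_{n-1}(z) = (1/(n-1)!) ∫₀^∞ (z + u)^(n-1) e^{-u} du`, so at `z = n w`
`S_{n-1}(n w) = (n w)^(n-1)/(n-1)! · J`,  `J = ∫₀^∞ (1 + u/(n w))^(n-1) e^{-u} du`.
For `|w| ≥ 1 + δ` and `c = δ/(1+δ)` the integrand of `J` is within `O((u² + u)/n) e^{-cu}` of
`e^{-(1 - 1/w) u}`: for `u ≤ √n/2` compare logarithms,
`(n-1) log(1 + u/(n w)) = u/w + O((u² + u)/n)`; beyond, both are bounded by `e^{-cu}` and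
`1 ≤ 4u²/n`. Hence `J = w/(w-1) + O(1/n)`. Stirling's formula with Robbins' bound
`√π ≤ stirlingSeq n ≤ √π e^{1/(12n)}` turns `(n w)^(n-1) e^{-n w}/(n-1)!` into
`(w e^{1-w})^n / (√(2πn) w)` up to a factor `1 + O(1/n)`. The relative error is therefore
`O(1/n)`, and `1/n ≤ n^(1-3α)`.
-/

open MeasureTheory Set Filter Topology Finset Real
open scoped Nat

lemma integrableOn_Ioi_pow_mul_exp_neg_mul (m : ℕ) {c : ℝ} (hc : 0 < c) :
    IntegrableOn (fun u : ℝ => u ^ m * rexp (-(c * u))) (Ioi 0) := by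
  refine (integrableOn_rpow_mul_exp_neg_mul_rpow (s := m) (p := 1)
    (by linarith [m.cast_nonneg (α := ℝ)]) one_pos hc).congr_fun (fun u _ => ?_) measurableSet_Ioi
  simp [rpow_natCast]

lemma integral_Ioi_pow_mul_exp_neg_mul (m : ℕ) {c : ℝ} (hc : 0 < c) :
    ∫ u in Ioi (0 : ℝ), u ^ m * rexp (-(c * u)) = m ! / c ^ (m + 1) := by
  have h := integral_rpow_mul_exp_neg_mul_Ioi (a := m + 1) (by positivity) hc
  rw [add_sub_cancel_right, Gamma_nat_eq_factorial, ← Nat.cast_succ] at h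
  simp only [rpow_natCast] at h
  rw [h, one_div, inv_pow, inv_mul_eq_div]

lemma integral_Ioi_ofReal_pow_mul_exp_neg (m : ℕ) :
    ∫ u in Ioi (0 : ℝ), (u : ℂ) ^ m * Complex.exp (-u) = m ! := by
  have h := congrArg ((↑) : ℝ → ℂ) (integral_Ioi_pow_mul_exp_neg_mul m one_pos)
  rw [← integral_complex_ofReal] at h
  simpa using h

lemma integrableOn_Ioi_ofReal_pow_mul_exp_neg (m : ℕ) :
    IntegrableOn (fun u : ℝ => (u : ℂ) ^ m * Complex.exp (-u)) (Ioi 0) := by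
  refine IntegrableOn.congr_fun (Integrable.ofReal (𝕜 := ℂ)
    (integrableOn_Ioi_pow_mul_exp_neg_mul m one_pos)) (fun u _ => ?_) measurableSet_Ioi
  simp

lemma integral_Ioi_add_pow_mul_exp_neg (m : ℕ) (z : ℂ) :
    ∫ u in Ioi (0 : ℝ), (z + u) ^ m * Complex.exp (-u) =
      m ! * ∑ k ∈ range (m + 1), z ^ k / k ! := by
  have hexpand : ∀ u : ℝ, (z + u) ^ m * Complex.exp (-u) =
      ∑ k ∈ range (m + 1), z ^ k * m.choose k * ((u : ℂ) ^ (m - k) * Complex.exp (-u)) := by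
    intro u
    rw [add_pow, sum_mul]
    exact sum_congr rfl fun k _ => by ring
  simp_rw [hexpand]
  rw [integral_finsetSum _ fun k _ => (integrableOn_Ioi_ofReal_pow_mul_exp_neg _).const_mul _,
    mul_sum]
  refine sum_congr rfl fun k hk => ?_
  rw [integral_const_mul, integral_Ioi_ofReal_pow_mul_exp_neg,
    ← Nat.choose_mul_factorial_mul_factorial (Nat.lt_succ_iff.mp (mem_range.mp hk))]
  have hk0 : (k ! : ℂ) ≠ 0 := by exact_mod_cast k.factorial_ne_zero
  push_cast
  field_simp

lemma stirlingSeq_le_sqrt_pi_mul_exp {n : ℕ} (hn : n ≠ 0) :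
    Stirling.stirlingSeq n ≤ √π * rexp (1 / (12 * n)) := by
  obtain ⟨m, rfl⟩ := Nat.exists_eq_add_one_of_ne_zero hn
  set g : ℕ → ℝ := fun k => log (Stirling.stirlingSeq (k + 1)) - 1 / (12 * (k + 1)) with hg
  have hmono : Monotone g := monotone_nat_of_le_succ fun k => by
    have h := Stirling.log_stirlingSeq_sdiff_le (k + 1)
    have hsplit : (1 : ℝ) / (12 * (k + 1)) - 1 / (12 * (k + 1 + 1)) =
        1 / (12 * (k + 1) * (k + 1 + 1)) := by
      field_simp; ring
    simp only [hg]
    push_cast at h ⊢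
    linarith
  have htend : Tendsto g atTop (𝓝 (log √π - 0)) := by
    refine (((Stirling.tendsto_stirlingSeq_sqrt_pi.comp (tendsto_add_atTop_nat 1)).log
      (by positivity)).sub ?_)
    exact tendsto_const_nhds.div_atTop
      ((tendsto_natCast_atTop_atTop.atTop_add tendsto_const_nhds).const_mul_atTop (by norm_num))
  have hle : g m ≤ log √π := by simpa using hmono.ge_of_tendsto htend m
  calc Stirling.stirlingSeq (m + 1) = rexp (log (Stirling.stirlingSeq (m + 1))) :=
        (exp_log (Stirling.stirlingSeq'_pos m)).symm
    _ ≤ rexp (log √π + 1 / (12 * (m + 1))) := exp_le_exp.mpr (by simp only [hg] at hle; linarith)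
    _ = √π * rexp (1 / (12 * ↑(m + 1))) := by
        rw [exp_add, exp_log (by positivity)]; push_cast; ring

lemma stirlingSeq_div_sqrt_pi_le {n : ℕ} (hn : n ≠ 0) :
    Stirling.stirlingSeq n / √π ≤ 1 + 1 / n := by
  have hn1 : (1 : ℝ) ≤ n := by exact_mod_cast Nat.one_le_iff_ne_zero.mpr hn
  have hx : |1 / (12 * (n : ℝ))| ≤ 1 := by
    rw [abs_of_pos (by positivity), div_le_one (by positivity)]; linarith
  have hexp := (abs_le.mp (abs_exp_sub_one_le hx)).2
  rw [div_le_iff₀ (by positivity)]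
  calc Stirling.stirlingSeq n ≤ √π * rexp (1 / (12 * n)) := stirlingSeq_le_sqrt_pi_mul_exp hn
    _ ≤ √π * (1 + 1 / n) := by
        gcongr
        rw [abs_of_pos (by positivity)] at hexp
        have : 2 * (1 / (12 * (n : ℝ))) ≤ 1 / n := by
          field_simp; norm_num
        linarith
    _ = (1 + 1 / n) * √π := mul_comm _ _

lemma factorial_pred_eq_stirlingSeq {n : ℕ} (hn : n ≠ 0) :
    ((n - 1)! : ℝ) = Stirling.stirlingSeq n / √π * √(2 * π * n) * n ^ (n - 1) / rexp n := by
  obtain ⟨m, rfl⟩ := Nat.exists_eq_add_one_of_ne_zero hn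
  have h2m : 0 < √(2 * (m + 1 : ℕ)) := sqrt_pos.mpr (by positivity)
  rw [Stirling.stirlingSeq, Nat.add_sub_cancel, Nat.factorial_succ, div_pow, ← exp_nat_mul,
    mul_assoc 2 π, mul_left_comm 2 π, sqrt_mul pi_pos.le, mul_one]
  push_cast at h2m ⊢
  field_simp
  ring

lemma norm_cexp_sub_cexp_le {a b : ℂ} (h : ‖a - b‖ ≤ 1) :
    ‖Complex.exp a - Complex.exp b‖ ≤ 2 * ‖a - b‖ * rexp b.re := by
  have hfactor : Complex.exp a - Complex.exp b = Complex.exp b * (Complex.exp (a - b) - 1) := by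
    rw [mul_sub, ← Complex.exp_add, add_sub_cancel, mul_one]
  rw [hfactor, norm_mul, Complex.norm_exp, mul_comm]
  gcongr
  exact Complex.norm_exp_sub_one_le h

lemma norm_natCast_pred_mul_log_one_add_div_sub_le {x : ℂ} {n : ℕ} (hn : n ≠ 0)
    (hx : 2 * ‖x‖ ≤ n) :
    ‖((n - 1 : ℕ) : ℂ) * Complex.log (1 + x / n) - x‖ ≤ (‖x‖ ^ 2 + ‖x‖) / n := by
  have hn0 : (0 : ℝ) < n := by positivity
  set z := x / n with hz
  have hnz : ‖z‖ = ‖x‖ / n := by rw [hz, norm_div, Complex.norm_natCast]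
  have hz_half : ‖z‖ ≤ 1 / 2 := by
    rw [hnz, div_le_iff₀ hn0]; linarith
  have hlog : ‖Complex.log (1 + z) - z‖ ≤ ‖z‖ ^ 2 := by
    refine (Complex.norm_log_one_add_sub_self_le (by linarith)).trans ?_
    have : (1 - ‖z‖)⁻¹ ≤ 2 := by
      rw [inv_le_comm₀ (by linarith) two_pos]; linarith
    nlinarith [sq_nonneg ‖z‖]
  have hsplit : ((n - 1 : ℕ) : ℂ) * Complex.log (1 + z) - x =
      ((n - 1 : ℕ) : ℂ) * (Complex.log (1 + z) - z) - z := by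
    rw [Nat.cast_pred (Nat.pos_of_ne_zero hn), hz]
    field_simp
    ring
  have hpred : ((n - 1 : ℕ) : ℝ) ≤ n := by exact_mod_cast n.sub_le 1
  calc ‖((n - 1 : ℕ) : ℂ) * Complex.log (1 + z) - x‖
      ≤ (n - 1 : ℕ) * ‖Complex.log (1 + z) - z‖ + ‖z‖ := by
        rw [hsplit]
        refine (norm_sub_le _ _).trans ?_
        rw [norm_mul, Complex.norm_natCast]
    _ ≤ n * ‖z‖ ^ 2 + ‖z‖ := by gcongr
    _ = (‖x‖ ^ 2 + ‖x‖) / n := by rw [hnz]; field_simp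

lemma norm_one_add_div_pow_sub_cexp_le {x : ℂ} {n : ℕ} (hn : n ≠ 0) (hx : 2 * ‖x‖ ≤ n)
    (hx' : ‖x‖ ^ 2 + ‖x‖ ≤ n) :
    ‖(1 + x / n) ^ (n - 1) - Complex.exp x‖ ≤ 2 * ((‖x‖ ^ 2 + ‖x‖) / n) * rexp x.re := by
  have hn0 : (0 : ℝ) < n := by positivity
  have hne : 1 + x / n ≠ 0 := by
    intro h
    have : ‖x / n‖ = 1 := by rw [eq_neg_of_add_eq_zero_right h, norm_neg, norm_one]
    rw [norm_div, Complex.norm_natCast, div_eq_one_iff_eq hn0.ne'] at this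
    linarith [norm_nonneg x]
  have hpow : (1 + x / n) ^ (n - 1) =
      Complex.exp (((n - 1 : ℕ) : ℂ) * Complex.log (1 + x / n)) := by
    rw [Complex.exp_nat_mul, Complex.exp_log hne]
  have hlog := norm_natCast_pred_mul_log_one_add_div_sub_le hn hx
  rw [hpow]
  refine (norm_cexp_sub_cexp_le (hlog.trans ?_)).trans ?_
  · rwa [div_le_one hn0]
  · gcongr

lemma norm_one_add_div_pow_le (x : ℂ) (n : ℕ) : ‖(1 + x / n) ^ (n - 1)‖ ≤ rexp ‖x‖ := by
  rcases Nat.eq_zero_or_pos n with rfl | hn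
  · simp
  have hbase : ‖1 + x / n‖ ≤ rexp (‖x‖ / n) := by
    calc ‖1 + x / n‖ ≤ 1 + ‖x‖ / n := by
          simpa [norm_div, Complex.norm_natCast] using norm_add_le (1 : ℂ) (x / n)
      _ ≤ rexp (‖x‖ / n) := by linarith [add_one_le_exp (‖x‖ / n)]
  calc ‖(1 + x / n) ^ (n - 1)‖ ≤ rexp (‖x‖ / n) ^ (n - 1) := by
        rw [norm_pow]; gcongr
    _ ≤ rexp (‖x‖ / n) ^ n := pow_le_pow_right₀ (one_le_exp (by positivity)) (n.sub_le 1)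
    _ = rexp ‖x‖ := by rw [← exp_nat_mul]; field_simp

lemma norm_one_add_div_pow_mul_cexp_neg_sub_le {n : ℕ} (hn : n ≠ 0) {x : ℂ} {u c : ℝ}
    (hu : 0 ≤ u) (hc : 0 ≤ c) (hx : ‖x‖ ≤ (1 - c) * u) :
    ‖(1 + x / n) ^ (n - 1) * Complex.exp (-u) - Complex.exp (x - u)‖ ≤
      (8 * u ^ 2 + 2 * u) / n * rexp (-(c * u)) := by
  have hn1 : (1 : ℝ) ≤ n := by exact_mod_cast Nat.one_le_iff_ne_zero.mpr hn
  have hxu : ‖x‖ ≤ u := by nlinarith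
  have hre : x.re - u ≤ -(c * u) := by linarith [Complex.re_le_norm x]
  have hnorm_neg : ‖Complex.exp (-u)‖ = rexp (-u) := by
    rw [← Complex.ofReal_neg, Complex.norm_exp_ofReal]
  by_cases hsmall : 4 * u ^ 2 ≤ n
  · have hfactor : (1 + x / n) ^ (n - 1) * Complex.exp (-u) - Complex.exp (x - u) =
        ((1 + x / n) ^ (n - 1) - Complex.exp x) * Complex.exp (-u) := by
      rw [sub_mul, ← Complex.exp_add, ← sub_eq_add_neg]
    have h2u : 2 * u ≤ n := by nlinarith [sq_nonneg (2 * u - 1)]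
    have hbound := norm_one_add_div_pow_sub_cexp_le (x := x) hn (by linarith)
      (by nlinarith [pow_le_pow_left₀ (norm_nonneg x) hxu 2])
    rw [hfactor, norm_mul, hnorm_neg]
    calc ‖(1 + x / n) ^ (n - 1) - Complex.exp x‖ * rexp (-u)
        ≤ 2 * ((‖x‖ ^ 2 + ‖x‖) / n) * rexp x.re * rexp (-u) := by gcongr
      _ ≤ 2 * ((u ^ 2 + u) / n) * rexp (-(c * u)) := by
        rw [mul_assoc, ← exp_add]; gcongr; linarith
      _ ≤ (8 * u ^ 2 + 2 * u) / n * rexp (-(c * u)) := by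
        gcongr; rw [← mul_div_assoc]; gcongr; nlinarith
  · calc ‖(1 + x / n) ^ (n - 1) * Complex.exp (-u) - Complex.exp (x - u)‖
        ≤ rexp ‖x‖ * rexp (-u) + rexp (x.re - u) := by
          refine (norm_sub_le _ _).trans ?_
          rw [norm_mul, hnorm_neg, Complex.norm_exp, Complex.sub_re, Complex.ofReal_re]
          gcongr
          exact norm_one_add_div_pow_le x n
      _ ≤ 2 * rexp (-(c * u)) := by
        have hx' : ‖x‖ + -u ≤ -(c * u) := by linarith
        rw [← exp_add]
        linarith [exp_le_exp.mpr hre, exp_le_exp.mpr hx']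
      _ ≤ (8 * u ^ 2 + 2 * u) / n * rexp (-(c * u)) := by
        gcongr
        rw [le_div_iff₀ (by positivity)]
        nlinarith

lemma integral_Ioi_cexp_div_sub {w : ℂ} (hw0 : w ≠ 0) (hw : w⁻¹.re < 1) :
    ∫ u in Ioi (0 : ℝ), Complex.exp (u / w - u) = w / (w - 1) := by
  have hre : (w⁻¹ - 1).re < 0 := by simpa using hw
  have hfun : (fun u : ℝ => Complex.exp (u / w - u)) =
      fun u : ℝ => Complex.exp ((w⁻¹ - 1) * u) := by
    ext u; ring_nf
  rw [hfun, integral_exp_mul_complex_Ioi hre, Complex.ofReal_zero, mul_zero, Complex.exp_zero]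
  have hw1 : w - 1 ≠ 0 := by rintro h; rw [sub_eq_zero.mp h] at hre; simp at hre
  rw [show w⁻¹ - 1 = -((w - 1) / w) by field_simp; ring, div_neg, neg_div, neg_neg, one_div_div]

lemma integrableOn_Ioi_cexp_div_sub {w : ℂ} (hw : w⁻¹.re < 1) :
    IntegrableOn (fun u : ℝ => Complex.exp (u / w - u)) (Ioi 0) := by
  have hre : (w⁻¹ - 1).re < 0 := by simpa using hw
  refine (integrableOn_exp_mul_complex_Ioi hre 0).congr_fun (fun u _ => ?_) measurableSet_Ioi
  ring_nf

lemma integrableOn_Ioi_quadratic_mul_exp_neg_mul {c : ℝ} (hc : 0 < c) (a b : ℝ) :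
    IntegrableOn (fun u : ℝ => (a * u ^ 2 + b * u) * rexp (-(c * u))) (Ioi 0) :=
  IntegrableOn.congr_fun (((integrableOn_Ioi_pow_mul_exp_neg_mul 2 hc).const_mul a).add
    ((integrableOn_Ioi_pow_mul_exp_neg_mul 1 hc).const_mul b))
    (fun u _ => by simp only [Pi.add_apply]; ring) measurableSet_Ioi

lemma integral_Ioi_quadratic_mul_exp_neg_mul {c : ℝ} (hc : 0 < c) (a b : ℝ) :
    ∫ u in Ioi (0 : ℝ), (a * u ^ 2 + b * u) * rexp (-(c * u)) = 2 * a / c ^ 3 + b / c ^ 2 := by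
  have hsplit : ∀ u : ℝ, (a * u ^ 2 + b * u) * rexp (-(c * u)) =
      a * (u ^ 2 * rexp (-(c * u))) + b * (u ^ 1 * rexp (-(c * u))) := fun u => by ring
  simp_rw [hsplit]
  rw [integral_add ((integrableOn_Ioi_pow_mul_exp_neg_mul 2 hc).const_mul a)
      ((integrableOn_Ioi_pow_mul_exp_neg_mul 1 hc).const_mul b),
    integral_const_mul, integral_const_mul,
    integral_Ioi_pow_mul_exp_neg_mul 2 hc, integral_Ioi_pow_mul_exp_neg_mul 1 hc]
  norm_num
  ring

lemma norm_integral_Ioi_one_add_div_pow_mul_cexp_neg_sub_le {n : ℕ} (hn : n ≠ 0) {w : ℂ}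
    {c : ℝ} (hc : 0 < c) (hw : 1 ≤ (1 - c) * ‖w‖) :
    ‖(∫ u in Ioi (0 : ℝ), (1 + u / w / n) ^ (n - 1) * Complex.exp (-u)) - w / (w - 1)‖ ≤
      (16 / c ^ 3 + 2 / c ^ 2) / n := by
  have hw0 : 0 < ‖w‖ := by nlinarith [norm_nonneg w]
  have hwinv : w⁻¹.re < 1 := by
    refine (Complex.re_le_norm _).trans_lt ?_
    rw [norm_inv, inv_lt_one₀ hw0]; nlinarith
  set f : ℝ → ℂ := fun u => (1 + u / w / n) ^ (n - 1) * Complex.exp (-u)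
  set g : ℝ → ℂ := fun u => Complex.exp (u / w - u)
  have hdint := integrableOn_Ioi_quadratic_mul_exp_neg_mul hc 8 2
  have hbound : ∀ u ∈ Ioi (0 : ℝ), ‖f u - g u‖ ≤ (8 * u ^ 2 + 2 * u) * rexp (-(c * u)) / n := by
    intro u hu
    rw [mul_div_right_comm]
    refine norm_one_add_div_pow_mul_cexp_neg_sub_le hn (le_of_lt hu) hc.le ?_
    rw [norm_div, Complex.norm_real, Real.norm_of_nonneg (le_of_lt hu), div_le_iff₀ hw0]
    nlinarith [mem_Ioi.mp hu]
  have hfg : IntegrableOn (fun u => f u - g u) (Ioi 0) := by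
    refine Integrable.mono' (hdint.div_const n) (by fun_prop) ?_
    exact (ae_restrict_iff' measurableSet_Ioi).mpr (Eventually.of_forall hbound)
  have hg := integrableOn_Ioi_cexp_div_sub hwinv
  have hf : IntegrableOn f (Ioi 0) :=
    (hfg.add hg).congr_fun (fun u _ => sub_add_cancel (f u) (g u)) measurableSet_Ioi
  rw [← integral_Ioi_cexp_div_sub (norm_pos_iff.mp hw0) hwinv, ← integral_sub hf hg]
  calc ‖∫ u in Ioi (0 : ℝ), f u - g u‖
      ≤ ∫ u in Ioi (0 : ℝ), (8 * u ^ 2 + 2 * u) * rexp (-(c * u)) / n :=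
        norm_integral_le_of_norm_le (hdint.div_const n)
          ((ae_restrict_iff' measurableSet_Ioi).mpr (Eventually.of_forall hbound))
    _ = (16 / c ^ 3 + 2 / c ^ 2) / n := by
      rw [integral_div, integral_Ioi_quadratic_mul_exp_neg_mul hc]; ring

lemma sum_range_mul_cexp_neg_eq {n : ℕ} (hn : n ≠ 0) {w : ℂ} (hw : w ≠ 0) :
    (∑ k ∈ range n, ((n : ℂ) * w) ^ k / k !) * Complex.exp (-n * w) =
      (w * Complex.exp (1 - w)) ^ n /
          ((√(2 * π * n) : ℂ) * w * ((Stirling.stirlingSeq n / √π : ℝ) : ℂ)) *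
        ∫ u in Ioi (0 : ℝ), (1 + u / w / n) ^ (n - 1) * Complex.exp (-u) := by
  obtain ⟨m, rfl⟩ := Nat.exists_eq_add_one_of_ne_zero hn
  have hsum := integral_Ioi_add_pow_mul_exp_neg m ((m + 1 : ℕ) * w)
  have hfactor : ∀ u : ℝ, ((m + 1 : ℕ) * w + u) ^ m * Complex.exp (-u) =
      ((m + 1 : ℕ) * w) ^ m * ((1 + u / w / (m + 1 : ℕ)) ^ m * Complex.exp (-u)) := by
    intro u
    rw [← mul_assoc, ← mul_pow]
    congr 2
    field_simp
  simp_rw [hfactor] at hsum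
  rw [integral_const_mul] at hsum
  have hfac := congrArg ((↑) : ℝ → ℂ) (factorial_pred_eq_stirlingSeq hn)
  rw [Nat.add_sub_cancel] at hfac ⊢
  have hWn : (w * Complex.exp (1 - w)) ^ (m + 1) =
      w ^ (m + 1) * Complex.exp (m + 1) * Complex.exp (-(m + 1 : ℕ) * w) := by
    rw [mul_pow, ← Complex.exp_nat_mul, mul_assoc, ← Complex.exp_add]
    push_cast; ring_nf
  push_cast at hfac hsum hWn ⊢
  rw [hfac] at hsum
  rw [hWn]
  generalize (∫ u in Ioi (0 : ℝ), (1 + u / w / (m + 1)) ^ m * Complex.exp (-u)) = J at hsum ⊢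
  generalize (∑ k ∈ range (m + 1), ((m + 1) * w) ^ k / (k ! : ℂ)) = S at hsum ⊢
  have hst : (Stirling.stirlingSeq (m + 1) : ℂ) ≠ 0 := by
    exact_mod_cast (Stirling.stirlingSeq'_pos m).ne'
  have hm1 : (m + 1 : ℂ) ≠ 0 := by exact_mod_cast m.succ_ne_zero
  field_simp at hsum ⊢
  rw [mul_pow] at hsum
  apply mul_left_cancel₀ (pow_ne_zero m hm1)
  linear_combination (-w) * hsum

lemma norm_div_mul_sub_one_div_le {w J : ℂ} {r ε η : ℝ} (hw : 1 ≤ ‖w‖) (hw1 : w ≠ 1)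
    (hr : 1 ≤ r) (hr' : r ≤ 1 + η) (hJ : ‖J - w / (w - 1)‖ ≤ ε) :
    ‖J / (w * r) - 1 / (w - 1)‖ ≤ (2 * ε + η) / ‖w - 1‖ := by
  have hw0 : w ≠ 0 := norm_pos_iff.mp (by linarith)
  have hw1' : w - 1 ≠ 0 := sub_ne_zero.mpr hw1
  have hnw1 : 0 < ‖w - 1‖ := norm_pos_iff.mpr hw1'
  have hnw1_le : ‖w - 1‖ ≤ 2 * ‖w‖ := by
    linarith [norm_sub_le w 1, norm_one (α := ℂ)]
  have hε : 0 ≤ ε := (norm_nonneg _).trans hJ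
  have hr0 : (r : ℂ) ≠ 0 := by exact_mod_cast (by linarith : r ≠ 0)
  have hsplit : J / (w * r) - 1 / (w - 1) =
      ((J - w / (w - 1)) - w / (w - 1) * ((r - 1 : ℝ) : ℂ)) / (w * r) := by
    push_cast
    field_simp
    ring
  have hnum : ‖(J - w / (w - 1)) - w / (w - 1) * ((r - 1 : ℝ) : ℂ)‖ ≤
      ε + ‖w‖ * η / ‖w - 1‖ := by
    refine (norm_sub_le _ _).trans (add_le_add hJ ?_)
    rw [norm_mul, norm_div, Complex.norm_real, Real.norm_of_nonneg (by linarith),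
      mul_div_right_comm]
    gcongr
    linarith
  rw [hsplit, norm_div, norm_mul, Complex.norm_real, Real.norm_of_nonneg (by linarith)]
  calc ‖(J - w / (w - 1)) - w / (w - 1) * ((r - 1 : ℝ) : ℂ)‖ / (‖w‖ * r)
      ≤ (ε + ‖w‖ * η / ‖w - 1‖) / (‖w‖ * 1) := by
        gcongr
        exact (norm_nonneg _).trans hnum
    _ ≤ (2 * ε + η) / ‖w - 1‖ := by
        rw [mul_one, div_le_div_iff₀ (by linarith) hnw1, add_mul, div_mul_cancel₀ _ hnw1.ne']
        nlinarith

theorem stmt_3_general (α : ℝ) (hα2 : α < 1 / 2) (δ : ℝ) (hδ : 0 < δ) :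
    ∃ C > 0, ∀ n : ℕ, 1 ≤ n → ∀ w : ℂ, 1 + δ ≤ ‖w‖ →
      ‖(∑ k ∈ Finset.range n, ((n : ℂ) * w) ^ k / (Nat.factorial k : ℂ)) *
            Complex.exp (-(n : ℂ) * w) -
          (w * Complex.exp (1 - w)) ^ n /
            ((Real.sqrt (2 * Real.pi * n) : ℂ) * (w - 1))‖ ≤
      C * (n : ℝ) ^ ((1 : ℝ) - 3 * α) *
        ‖(w * Complex.exp (1 - w)) ^ n‖ /
          (Real.sqrt (2 * Real.pi * n) * ‖w - 1‖) := by
  set c := δ / (1 + δ) with hc_def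
  have hc : 0 < c := by positivity
  set B := 16 / c ^ 3 + 2 / c ^ 2
  refine ⟨2 * B + 1, by positivity, fun n hn w hw => ?_⟩
  have hn0 : n ≠ 0 := Nat.one_le_iff_ne_zero.mp hn
  have hn1 : (1 : ℝ) ≤ n := by exact_mod_cast hn
  have hw1 : 1 ≤ ‖w‖ := by linarith
  have hw_ne_one : w ≠ 1 := by rintro rfl; rw [norm_one] at hw; linarith
  have hJ := norm_integral_Ioi_one_add_div_pow_mul_cexp_neg_sub_le hn0 hc (w := w) (by
    rw [hc_def, one_sub_div (by positivity), add_sub_cancel_right, div_mul_eq_mul_div,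
      le_div_iff₀ (by positivity)]
    linarith)
  have hr : 1 ≤ Stirling.stirlingSeq n / √π :=
    (one_le_div (sqrt_pos.mpr pi_pos)).mpr (Stirling.sqrt_pi_le_stirlingSeq hn0)
  have hrel := norm_div_mul_sub_one_div_le hw1 hw_ne_one hr (stirlingSeq_div_sqrt_pi_le hn0) hJ
  have hpow : 1 / (n : ℝ) ≤ (n : ℝ) ^ ((1 : ℝ) - 3 * α) := by
    rw [one_div, ← rpow_neg_one]
    exact rpow_le_rpow_of_exponent_le hn1 (by linarith)
  rw [sum_range_mul_cexp_neg_eq hn0 (norm_pos_iff.mp (by linarith))]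
  generalize (∫ u in Ioi (0 : ℝ), (1 + u / w / n) ^ (n - 1) * Complex.exp (-u)) = J at hrel ⊢
  generalize Stirling.stirlingSeq n / √π = r at hrel ⊢
  generalize (w * Complex.exp (1 - w)) ^ n = W
  have hfactor : W / (√(2 * π * n) * w * r) * J - W / (√(2 * π * n) * (w - 1)) =
      W / √(2 * π * n) * (J / (w * r) - 1 / (w - 1)) := by
    simp only [div_eq_mul_inv, mul_inv]; ring
  rw [hfactor, norm_mul, norm_div, Complex.norm_real, norm_of_nonneg (sqrt_nonneg _)]
  calc ‖W‖ / √(2 * π * n) * ‖J / (w * r) - 1 / (w - 1)‖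
      ≤ ‖W‖ / √(2 * π * n) * ((2 * (B / n) + 1 / n) / ‖w - 1‖) := by gcongr
    _ = (2 * B + 1) * (1 / n) * ‖W‖ / (√(2 * π * n) * ‖w - 1‖) := by ring
    _ ≤ (2 * B + 1) * (n : ℝ) ^ ((1 : ℝ) - 3 * α) * ‖W‖ / (√(2 * π * n) * ‖w - 1‖) := by gcongr

/-- Outside-the-disk Szegő approximation: for `1/3 < α < 1/2`, `δ > 0`
and `S = {|w| ≥ 1 + δ}`, there is `C > 0` with
`|S_{n−1}(nw) e^{−nw} − (w e^{1−w})^n/(√(2πn)(w−1))|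
  ≤ C n^{1−3α} |(w e^{1−w})^n| / (√(2πn)|w−1|)`
for all `n ≥ 1` and `w ∈ S`. -/
theorem stmt_3 (α : ℝ) (hα1 : 1 / 3 < α) (hα2 : α < 1 / 2) (δ : ℝ) (hδ : 0 < δ) :
    ∃ C > 0, ∀ n : ℕ, 1 ≤ n → ∀ w : ℂ, 1 + δ ≤ ‖w‖ →
      ‖(∑ k ∈ Finset.range n, ((n : ℂ) * w) ^ k / (Nat.factorial k : ℂ)) *
            Complex.exp (-(n : ℂ) * w) -
          (w * Complex.exp (1 - w)) ^ n /
            ((Real.sqrt (2 * Real.pi * n) : ℂ) * (w - 1))‖ ≤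
      C * (n : ℝ) ^ ((1 : ℝ) - 3 * α) *
        ‖(w * Complex.exp (1 - w)) ^ n‖ /
          (Real.sqrt (2 * Real.pi * n) * ‖w - 1‖) :=
  stmt_3_general α hα2 δ hδ
end

section
/- For every compact subset K of {x ∈ ℂ : |x| > 1/r_0} and every η > 0 there exists N such that for all integers n ≥ N and all x ∈ K, p_n(n x) ≠ 0 and | (1/n) · ln | √(2πn) · p_n(n x) / (e x)^n | | < η; that is, (1/n) ln |√(2πn) p_n(n x)/(e x)^n| → 0 uniformly on compact subsets of the complement of the closed disk of radius 1/r_0 centered at 0. -/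
/-!
Put `G = 1/g`, holomorphic on `‖t‖ < r₀`. Leibniz's rule in the Cauchy integral gives
`pₙ(y) = (1/n!) ∑ₖ C(n,k) G⁽ᵏ⁾(0) y^(n-k)`, hence `pₙ(nx) = (nx)ⁿ/n! · Sₙ(1/x)` with
`Sₙ(u) = ∑ₖ C(n,k) G⁽ᵏ⁾(0) (u/n)ᵏ`. As `C(n,k) n⁻ᵏ = (n^(k falling)/nᵏ)/k!` and the weight
`n^(k falling)/nᵏ ∈ [0,1]` tends to `1`, `Sₙ` is the Taylor series of `G` with damped terms, and
dominated convergence gives `Sₙ → G` locally uniformly on the disc `‖u‖ < r₀`. For `x ∈ K` the point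
`1/x` ranges over a compact part of that disc on which `G` has no zero, so `‖Sₙ(1/x)‖` is eventually
pinched between two positive constants. Stirling turns `√(2πn) (nx)ⁿ / (n! (ex)ⁿ)` into
`√π / stirlingSeq n ∈ [√(2π)/e, 1]`, so the argument of the logarithm is pinched too, and
`(1/n) log` of it tends to `0` uniformly on `K`.
-/

open Finset Filter Metric Topology
open scoped Nat

lemma descFactorial_div_pow_le_one (n k : ℕ) : (n.descFactorial k : ℝ) / n ^ k ≤ 1 :=
  div_le_one_of_le₀ (mod_cast Nat.descFactorial_le_pow n k) (by positivity)

lemma descFactorial_div_pow_eq_prod {n : ℕ} (hn : n ≠ 0) (k : ℕ) :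
    (n.descFactorial k : ℝ) / n ^ k = ∏ j ∈ range k, (1 - (j : ℝ) / n) := by
  rw [← descPochhammer_eval_eq_descFactorial, descPochhammer_eval_eq_prod_range,
    pow_eq_prod_const, ← prod_div_distrib]
  refine prod_congr rfl fun j _ => ?_
  field_simp

lemma tendsto_descFactorial_div_pow (k : ℕ) :
    Tendsto (fun n : ℕ => (n.descFactorial k : ℝ) / n ^ k) atTop (𝓝 1) := by
  have hprod : Tendsto (fun n : ℕ => ∏ j ∈ range k, (1 - j / (n : ℝ))) atTop (𝓝 1) := by
    simpa using tendsto_finsetProd (range k) fun j _ =>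
      (tendsto_const_div_atTop_nhds_zero_nat (j : ℝ)).const_sub 1
  refine hprod.congr' ?_
  filter_upwards [eventually_ne_atTop 0] with n hn using (descFactorial_div_pow_eq_prod hn k).symm

lemma tendsto_tsum_mul_one_sub_descFactorial_div_pow {b : ℕ → ℝ} (hb : Summable b)
    (hb0 : 0 ≤ b) :
    Tendsto (fun n : ℕ => ∑' k, b k * (1 - n.descFactorial k / n ^ k)) atTop (𝓝 0) := by
  have hterm (k : ℕ) : Tendsto (fun n : ℕ => b k * (1 - n.descFactorial k / n ^ k)) atTop
      (𝓝 0) := by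
    simpa using ((tendsto_descFactorial_div_pow k).const_sub 1).const_mul (b k)
  have hbound (n k : ℕ) : ‖b k * (1 - n.descFactorial k / n ^ k)‖ ≤ b k := by
    have h0 : (0 : ℝ) ≤ n.descFactorial k / n ^ k := by positivity
    rw [norm_mul, Real.norm_of_nonneg (hb0 k), Real.norm_of_nonneg
      (sub_nonneg.2 (descFactorial_div_pow_le_one n k))]
    exact mul_le_of_le_one_right (hb0 k) (by linarith)
  simpa using tendsto_tsum_of_dominated_convergence hb hterm (.of_forall hbound)

section Taylor

variable {f : ℂ → ℂ} {R ρ : ℝ}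

lemma summable_norm_taylorCoeff_mul_pow
    (hf : DifferentiableOn ℂ f (ball 0 R)) (hρ0 : 0 ≤ ρ) (hρR : ρ < R) :
    Summable fun k => ‖(k ! : ℂ)⁻¹ * iteratedDeriv k f 0‖ * ρ ^ k := by
  obtain ⟨R', hρR', hR'R⟩ := exists_between hρR
  have hR' : 0 < R' := hρ0.trans_lt hρR'
  obtain ⟨C, hC⟩ := (isCompact_sphere (0 : ℂ) R').exists_bound_of_continuousOn
    (hf.continuousOn.mono (sphere_subset_ball hR'R))
  have hcauchy (k : ℕ) : ‖iteratedDeriv k f 0‖ ≤ k ! * C / R' ^ k :=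
    Complex.norm_iteratedDeriv_le_of_forall_mem_sphere_norm_le k hR'
      (hf.diffContOnCl_ball (closedBall_subset_ball hR'R)) hC
  refine .of_nonneg_of_le (fun k => by positivity) (fun k => ?_)
    ((summable_geometric_of_lt_one (by positivity) ((div_lt_one hR').2 hρR')).mul_left C)
  calc ‖(k ! : ℂ)⁻¹ * iteratedDeriv k f 0‖ * ρ ^ k
      = ‖iteratedDeriv k f 0‖ / k ! * ρ ^ k := by
        rw [norm_mul, norm_inv, Complex.norm_natCast, inv_mul_eq_div]
    _ ≤ k ! * C / R' ^ k / k ! * ρ ^ k := by gcongr; exact hcauchy k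
    _ = C * (ρ / R') ^ k := by rw [div_pow]; field_simp

noncomputable def binomialTaylorSum (f : ℂ → ℂ) (n : ℕ) (u : ℂ) : ℂ :=
  ∑ k ∈ range (n + 1), n.choose k * iteratedDeriv k f 0 * (u / n) ^ k

lemma binomialTaylorSum_eq_tsum (f : ℂ → ℂ) (n : ℕ) (u : ℂ) :
    binomialTaylorSum f n u =
      ∑' k, (k ! : ℂ)⁻¹ * iteratedDeriv k f 0 * u ^ k * ((n.descFactorial k / n ^ k : ℝ) : ℂ) := by
  rw [tsum_eq_sum (s := range (n + 1)) fun k hk => by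
    simp [Nat.descFactorial_eq_zero_iff_lt.2 (by simpa using hk)]]
  refine sum_congr rfl fun k _ => ?_
  have hk : (k ! : ℂ) ≠ 0 := mod_cast k.factorial_ne_zero
  rw [Nat.descFactorial_eq_factorial_mul_choose, div_pow]
  push_cast
  field_simp

lemma norm_sub_binomialTaylorSum_le (hf : DifferentiableOn ℂ f (ball 0 R)) (hρR : ρ < R)
    {u : ℂ} (hu : ‖u‖ ≤ ρ) (n : ℕ) :
    ‖f u - binomialTaylorSum f n u‖ ≤
      ∑' k, ‖(k ! : ℂ)⁻¹ * iteratedDeriv k f 0‖ * ρ ^ k * (1 - n.descFactorial k / n ^ k) := by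
  set a : ℕ → ℂ := fun k => (k ! : ℂ)⁻¹ * iteratedDeriv k f 0
  set w : ℕ → ℝ := fun k => n.descFactorial k / n ^ k
  have hw (k : ℕ) : w k ∈ Set.Icc 0 1 := ⟨by positivity, descFactorial_div_pow_le_one n k⟩
  have hρ0 : 0 ≤ ρ := (norm_nonneg u).trans hu
  have hsum := summable_norm_taylorCoeff_mul_pow hf hρ0 hρR
  have hterm (k : ℕ) : ‖a k * u ^ k‖ ≤ ‖a k‖ * ρ ^ k := by
    rw [norm_mul, norm_pow]; gcongr
  have htaylor : f u = ∑' k, a k * u ^ k := by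
    simpa using (Complex.taylorSeries_eq_on_ball' (mem_ball_zero_iff.2 (hu.trans_lt hρR)) hf).symm
  have hweighted : Summable fun k => a k * u ^ k * (w k : ℂ) :=
    .of_norm_bounded hsum fun k => by
      rw [norm_mul, Complex.norm_real, Real.norm_of_nonneg (hw k).1]
      exact (mul_le_of_le_one_right (norm_nonneg _) (hw k).2).trans (hterm k)
  have hbound : Summable fun k => ‖a k‖ * ρ ^ k * (1 - w k) :=
    .of_nonneg_of_le (fun k => mul_nonneg (by positivity) (sub_nonneg.2 (hw k).2))
      (fun k => mul_le_of_le_one_right (by positivity) (by linarith [(hw k).1])) hsum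
  rw [htaylor, binomialTaylorSum_eq_tsum,
    ← (Summable.of_norm_bounded hsum hterm).tsum_sub hweighted]
  refine tsum_of_norm_bounded hbound.hasSum fun k => ?_
  rw [← mul_one_sub, norm_mul, ← Complex.ofReal_one, ← Complex.ofReal_sub, Complex.norm_real,
    Real.norm_of_nonneg (sub_nonneg.2 (hw k).2)]
  exact mul_le_mul_of_nonneg_right (hterm k) (sub_nonneg.2 (hw k).2)

theorem tendstoUniformlyOn_binomialTaylorSum (hf : DifferentiableOn ℂ f (ball 0 R)) (hρR : ρ < R) :
    TendstoUniformlyOn (binomialTaylorSum f) f atTop (closedBall 0 ρ) := by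
  rcases lt_or_ge ρ 0 with hρ0 | hρ0
  · simp [closedBall_eq_empty.2 hρ0, tendstoUniformlyOn_empty]
  have hlim := tendsto_tsum_mul_one_sub_descFactorial_div_pow
    (summable_norm_taylorCoeff_mul_pow hf hρ0 hρR) fun k => by positivity
  refine Metric.tendstoUniformlyOn_iff.2 fun ε hε => ?_
  filter_upwards [hlim.eventually (gt_mem_nhds hε)] with n hn u hu
  rw [dist_eq_norm]
  exact (norm_sub_binomialTaylorSum_le hf hρR (mem_closedBall_zero_iff.1 hu) n).trans_lt hn

theorem tendstoLocallyUniformlyOn_binomialTaylorSum (hf : DifferentiableOn ℂ f (ball 0 R)) :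
    TendstoLocallyUniformlyOn (binomialTaylorSum f) f atTop (ball 0 R) := by
  refine tendstoLocallyUniformlyOn_of_forall_exists_nhds fun u hu => ?_
  obtain ⟨ρ, huρ, hρR⟩ := exists_between (mem_ball_zero_iff.1 hu)
  exact ⟨closedBall 0 ρ, mem_nhdsWithin_of_mem_nhds (closedBall_mem_nhds_of_mem
    (mem_ball_zero_iff.2 huρ)), tendstoUniformlyOn_binomialTaylorSum hf hρR⟩

end Taylor

lemma circleIntegral_cexp_mul_div_pow {h : ℂ → ℂ} {ε : ℝ} (hε : 0 < ε)
    (hh : DifferentiableOn ℂ h (closedBall 0 ε)) (x : ℂ) (n : ℕ) :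
    (1 / (2 * (Real.pi : ℂ) * Complex.I)) *
        ∮ t in C(0, ε), Complex.exp (x * t) * h t / t ^ (n + 1) =
      (n ! : ℂ)⁻¹ * ∑ k ∈ range (n + 1), n.choose k * iteratedDeriv k h 0 * x ^ (n - k) := by
  have hF : DifferentiableOn ℂ (fun t => h t * Complex.exp (x * t)) (closedBall 0 ε) :=
    hh.mul (by fun_prop)
  have hcauchy := hF.circleIntegral_one_div_sub_center_pow_smul hε n
  have hh0 : ContDiffAt ℂ n h 0 := (hh.analyticAt (closedBall_mem_nhds 0 hε)).contDiffAt
  rw [iteratedDeriv_fun_mul hh0 (by fun_prop)] at hcauchy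
  simp only [sub_zero, smul_eq_mul, iteratedDeriv_cexp_const_mul, mul_zero, Complex.exp_zero,
    mul_one] at hcauchy
  calc _ = (1 / (2 * (Real.pi : ℂ) * Complex.I)) *
        ∮ t in C(0, ε), 1 / t ^ (n + 1) * (h t * Complex.exp (x * t)) := by
        congr 1; refine circleIntegral.integral_congr hε.le fun t _ => ?_; ring
    _ = _ := by rw [hcauchy]; field_simp

lemma sum_choose_mul_pow_sub {K : Type*} [Field K] (c : ℕ → K) {y : K} (hy : y ≠ 0) (n : ℕ) :
    ∑ k ∈ range (n + 1), n.choose k * c k * y ^ (n - k) =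
      y ^ n * ∑ k ∈ range (n + 1), n.choose k * c k * y⁻¹ ^ k := by
  rw [mul_sum]
  refine sum_congr rfl fun k hk => ?_
  rw [pow_sub₀ y hy (Nat.lt_succ_iff.1 (mem_range.1 hk)), inv_pow]
  ring

lemma circleIntegral_cexp_mul_div_mul_pow_eq {g : ℂ → ℂ} {ε : ℝ} (hε : 0 < ε)
    (hg : DifferentiableOn ℂ (fun t => (g t)⁻¹) (closedBall 0 ε)) {n : ℕ} (hn : n ≠ 0) {x : ℂ}
    (hx : x ≠ 0) :
    (1 / (2 * (Real.pi : ℂ) * Complex.I)) *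
        ∮ t in C(0, ε), Complex.exp (n * x * t) / (g t * t ^ (n + 1)) =
      (n * x) ^ n / n ! * binomialTaylorSum (fun t => (g t)⁻¹) n x⁻¹ := by
  have hnx : (n : ℂ) * x ≠ 0 := mul_ne_zero (Nat.cast_ne_zero.2 hn) hx
  have hint := circleIntegral_cexp_mul_div_pow hε hg (n * x) n
  simp only [← div_eq_mul_inv, div_div] at hint
  rw [hint, sum_choose_mul_pow_sub _ hnx, binomialTaylorSum, mul_inv, div_eq_inv_mul (x⁻¹),
    div_eq_inv_mul (_ ^ n), mul_assoc]

section Stirling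

open Real Stirling

lemma sqrt_pi_div_stirlingSeq (n : ℕ) :
    √π / stirlingSeq n = √(2 * π * n) * (n / exp 1) ^ n / n ! := by
  rcases eq_or_ne n 0 with rfl | hn
  · simp
  have h2n : √(2 * π * n) = √π * √(2 * n) := by
    rw [← Real.sqrt_mul pi_pos.le]; ring_nf
  rw [stirlingSeq, h2n]
  field_simp

lemma sqrt_pi_div_stirlingSeq_mem_Icc {n : ℕ} (hn : n ≠ 0) :
    √π / stirlingSeq n ∈ Set.Icc (√π / (exp 1 / √2)) 1 := by
  obtain ⟨m, rfl⟩ := Nat.exists_eq_succ_of_ne_zero hn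
  have hpos : 0 < stirlingSeq (m + 1) := stirlingSeq'_pos m
  have hle : stirlingSeq (m + 1) ≤ exp 1 / √2 := by
    simpa [stirlingSeq_one] using stirlingSeq'_antitone (Nat.zero_le m)
  exact ⟨div_le_div_of_nonneg_left (by positivity) hpos hle,
    div_le_one_of_le₀ (sqrt_pi_le_stirlingSeq hn) hpos.le⟩

lemma norm_sqrt_two_pi_mul_pow_div_factorial (n : ℕ) {x : ℂ} (hx : x ≠ 0) (s : ℂ) :
    ‖(√(2 * π * n) : ℂ) * ((n * x) ^ n / n ! * s) / (Complex.exp 1 * x) ^ n‖ =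
      √π / stirlingSeq n * ‖s‖ := by
  simp only [sqrt_pi_div_stirlingSeq, norm_div, norm_mul, norm_pow, Complex.norm_real,
    Complex.norm_natCast, Complex.norm_exp, Complex.one_re, Real.norm_of_nonneg (sqrt_nonneg _),
    mul_pow, div_pow]
  field_simp

lemma norm_sqrt_two_pi_mul_pow_div_factorial_mem_Icc {n : ℕ} (hn : n ≠ 0) {x : ℂ} (hx : x ≠ 0)
    {s : ℂ} {a b : ℝ} (ha : 0 ≤ a) (hs : ‖s‖ ∈ Set.Icc a b) :
    ‖(√(2 * π * n) : ℂ) * ((n * x) ^ n / n ! * s) / (Complex.exp 1 * x) ^ n‖ ∈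
      Set.Icc (√π / (exp 1 / √2) * a) b := by
  rw [norm_sqrt_two_pi_mul_pow_div_factorial n hx]
  obtain ⟨hc_le, hle_one⟩ := sqrt_pi_div_stirlingSeq_mem_Icc hn
  exact ⟨mul_le_mul hc_le hs.1 ha ((by positivity : (0 : ℝ) ≤ _).trans hc_le),
    (mul_le_of_le_one_left (norm_nonneg _) hle_one).trans hs.2⟩

end Stirling

lemma TendstoUniformlyOn.exists_eventually_norm_mem_Icc {α ι E : Type*} [TopologicalSpace α]
    [NormedAddCommGroup E] {F : ι → α → E} {f : α → E} {l : Filter ι} {K : Set α}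
    (hF : TendstoUniformlyOn F f l K) (hK : IsCompact K) (hf : ContinuousOn f K)
    (hf0 : ∀ x ∈ K, f x ≠ 0) :
    ∃ a b : ℝ, 0 < a ∧ ∀ᶠ n in l, ∀ x ∈ K, ‖F n x‖ ∈ Set.Icc a b := by
  rcases K.eq_empty_or_nonempty with rfl | hne
  · exact ⟨1, 1, one_pos, .of_forall fun _ _ h => h.elim⟩
  obtain ⟨x₀, hx₀, hmin⟩ := hK.exists_isMinOn hne hf.norm
  obtain ⟨M, hM⟩ := hK.exists_bound_of_continuousOn hf
  have hδ : 0 < ‖f x₀‖ / 2 := by have := norm_pos_iff.2 (hf0 x₀ hx₀); positivity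
  refine ⟨‖f x₀‖ / 2, M + ‖f x₀‖ / 2, hδ, ?_⟩
  filter_upwards [Metric.tendstoUniformlyOn_iff.1 hF _ hδ] with n hn x hx
  have hdist := hn x hx
  rw [dist_eq_norm] at hdist
  have h1 := norm_sub_norm_le (f x) (F n x)
  have h2 := norm_le_norm_add_norm_sub' (F n x) (f x)
  rw [norm_sub_rev] at h2
  exact ⟨by linarith [isMinOn_iff.1 hmin x hx], by linarith [hM x hx]⟩

lemma eventually_abs_inv_mul_log_lt {α : Type*} {A : ℕ → α → ℝ} {K : Set α} {a b η : ℝ}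
    (ha : 0 < a) (hη : 0 < η) (hA : ∀ᶠ n in atTop, ∀ x ∈ K, A n x ∈ Set.Icc a b) :
    ∀ᶠ n : ℕ in atTop, ∀ x ∈ K, |(1 / n : ℝ) * Real.log (A n x)| < η := by
  set L := max |Real.log a| |Real.log b|
  have hL : Tendsto (fun n : ℕ => (1 / n : ℝ) * L) atTop (𝓝 0) := by
    simpa using tendsto_one_div_atTop_nhds_zero_nat.mul_const L
  filter_upwards [hA, hL.eventually (gt_mem_nhds hη)] with n hn hlt x hx
  obtain ⟨hax, hxb⟩ := hn x hx
  have hlog : |Real.log (A n x)| ≤ L := abs_le_max_abs_abs (Real.log_le_log ha hax)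
    (Real.log_le_log (ha.trans_le hax) hxb)
  rw [abs_mul, abs_of_nonneg (by positivity)]
  exact (mul_le_mul_of_nonneg_left hlog (by positivity)).trans_lt hlt

theorem stmt_5_general (g : ℂ → ℂ) (hg : Differentiable ℂ g)
    (r0 : ℝ) (hr0pos : 0 < r0)
    (hr0 : IsLeast {r : ℝ | ∃ a : ℂ, g a = 0 ∧ ‖a‖ = r} r0)
    (p : ℕ → ℂ → ℂ)
    (hp : ∀ (n : ℕ) (x : ℂ) (ε : ℝ), 0 < ε → ε < r0 →
      p n x = (1 / (2 * (Real.pi : ℂ) * Complex.I)) *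
        ∮ t in C(0, ε), Complex.exp (x * t) / (g t * t ^ (n + 1))) :
    ∀ (K : Set ℂ), IsCompact K → (∀ x ∈ K, 1 / r0 < ‖x‖) →
      ∀ η > (0 : ℝ), ∃ N : ℕ, ∀ n : ℕ, N ≤ n → ∀ x ∈ K,
        p n ((n : ℂ) * x) ≠ 0 ∧
        |(1 / n : ℝ) * Real.log ‖
            ((Real.sqrt (2 * Real.pi * n) : ℂ) * p n ((n : ℂ) * x) /
              (Complex.exp 1 * x) ^ n)‖| < η := by
  intro K hK hKx η hη
  have hgne : ∀ t ∈ ball (0 : ℂ) r0, g t ≠ 0 := fun t ht h0 =>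
    (mem_ball_zero_iff.1 ht).not_ge (hr0.2 ⟨t, h0, rfl⟩)
  have hG : DifferentiableOn ℂ (fun t => (g t)⁻¹) (ball 0 r0) := fun t ht =>
    ((hg t).inv (hgne t ht)).differentiableWithinAt
  have hK0 : ∀ x ∈ K, x ≠ 0 := fun x hx =>
    norm_pos_iff.1 ((one_div_pos.2 hr0pos).trans (hKx x hx))
  have hKinv : Set.MapsTo (·⁻¹) K (ball (0 : ℂ) r0) := fun x hx => by
    rw [mem_ball_zero_iff, norm_inv]
    exact inv_lt_of_inv_lt₀ hr0pos (by simpa using hKx x hx)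
  have hunif := (tendstoLocallyUniformlyOn_iff_tendstoUniformlyOn_of_compact hK).1
    ((tendstoLocallyUniformlyOn_binomialTaylorSum hG).comp _ hKinv (continuousOn_inv₀.mono hK0))
  obtain ⟨a, b, ha, hS⟩ := hunif.exists_eventually_norm_mem_Icc hK
    (hG.continuousOn.comp (continuousOn_inv₀.mono hK0) hKinv)
    fun x hx => inv_ne_zero (hgne _ (hKinv hx))
  have hA : ∀ᶠ n : ℕ in atTop, ∀ x ∈ K, ‖(Real.sqrt (2 * Real.pi * n) : ℂ) * p n (n * x) /
      (Complex.exp 1 * x) ^ n‖ ∈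
        Set.Icc (Real.sqrt Real.pi / (Real.exp 1 / Real.sqrt 2) * a) b := by
    filter_upwards [hS, eventually_ne_atTop 0] with n hSn hn x hx
    rw [hp n _ _ (half_pos hr0pos) (half_lt_self hr0pos), circleIntegral_cexp_mul_div_mul_pow_eq
      (half_pos hr0pos) (hG.mono (closedBall_subset_ball (half_lt_self hr0pos))) hn (hK0 x hx)]
    exact norm_sqrt_two_pi_mul_pow_div_factorial_mem_Icc hn (hK0 x hx) ha.le (hSn x hx)
  have hca : 0 < Real.sqrt Real.pi / (Real.exp 1 / Real.sqrt 2) * a := by positivity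
  obtain ⟨N, hN⟩ := eventually_atTop.1 ((eventually_abs_inv_mul_log_lt hca hη hA).and hA)
  refine ⟨N, fun n hn x hx => ⟨fun h0 => ?_, (hN n hn).1 x hx⟩⟩
  have hlower := ((hN n hn).2 x hx).1
  rw [h0, mul_zero, zero_div, norm_zero] at hlower
  exact hca.not_ge hlower

/-- With `g`, `r₀`, `p` as in the Appell setup, for every compact
`K ⊆ {|x| > 1/r₀}` and every `η > 0` there is `N` such that for all `n ≥ N` and
`x ∈ K`, `pₙ(nx) ≠ 0` and `|(1/n) ln|√(2πn) pₙ(nx)/(ex)^n|| < η`; i.e.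
`(1/n) ln|√(2πn) pₙ(nx)/(ex)^n| → 0` uniformly on compact subsets of the
complement of the closed disk of radius `1/r₀`. -/
theorem stmt_5 (g : ℂ → ℂ) (hg : Differentiable ℂ g) (hg0 : g 0 ≠ 0)
    (r0 : ℝ) (hr0pos : 0 < r0)
    (hr0 : IsLeast {r : ℝ | ∃ a : ℂ, g a = 0 ∧ ‖a‖ = r} r0)
    (p : ℕ → ℂ → ℂ)
    (hp : ∀ (n : ℕ) (x : ℂ) (ε : ℝ), 0 < ε → ε < r0 →
      p n x = (1 / (2 * (Real.pi : ℂ) * Complex.I)) *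
        ∮ t in C(0, ε), Complex.exp (x * t) / (g t * t ^ (n + 1))) :
    ∀ (K : Set ℂ), IsCompact K → (∀ x ∈ K, 1 / r0 < ‖x‖) →
      ∀ η > (0 : ℝ), ∃ N : ℕ, ∀ n : ℕ, N ≤ n → ∀ x ∈ K,
        p n ((n : ℂ) * x) ≠ 0 ∧
        |(1 / n : ℝ) * Real.log ‖
            ((Real.sqrt (2 * Real.pi * n) : ℂ) * p n ((n : ℂ) * x) /
              (Complex.exp 1 * x) ^ n)‖| < η :=
  stmt_5_general g hg r0 hr0pos hr0 p hp
end

section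
/- Let a, β, b_1, …, b_β and J_n be as in the context. Then for every x ∈ ℂ, lim_{n→∞} J_n(a; n x) / n^{β−1} = (b_β/(β−1)!) · ((a x − 1)/a)^{β−1}. In particular, for fixed x with x ≠ 0 and a x ≠ 1, J_n(a; n x) = (b_β/(β−1)!) (n x)^{β−1} ((a x − 1)/(a x))^{β−1} (1 + o(1)) as n → ∞, so J_n(a; n x) has exact order n^{β−1} in n. -/
/-- The polynomial `J_n(a; z) = ∑_{m=1}^{β} (b_m/(m−1)!) ∑_{p=0}^{m−1}
(−1)^p p! C(m−1,p) C(n+p−1,p) a^{−p} z^{m−1−p}`. -/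
noncomputable def Jpoly (a : ℂ) (b : ℕ → ℂ) (β n : ℕ) (z : ℂ) : ℂ :=
  ∑ m ∈ Finset.Icc 1 β, (b m / (Nat.factorial (m - 1) : ℂ)) *
    ∑ p ∈ Finset.range m, (-1 : ℂ) ^ p * (Nat.factorial p : ℂ) *
      (Nat.choose (m - 1) p : ℂ) * (Nat.choose (n + p - 1) p : ℂ) *
      a ^ (-(p : ℤ)) * z ^ (m - 1 - p)

/-! Put `z = n x` and divide by `n ^ (β - 1)`: the `(m, p)` term of `J_n` becomes a constant
times `C(n + p - 1, p) / n ^ p · n ^ (-(β - m))`. Since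
`C(n + p - 1, p) = n (n + 1) ⋯ (n + p - 1) / p!`, the first factor tends to `1 / p!`, so only
the terms with `m = β` survive; there the `p!` cancels and what is left is `b_β / (β - 1)!`
times the binomial expansion of `(x - 1 / a) ^ (β - 1)`.
When `x ≠ 0` and `a x ≠ 1` this limit is nonzero, and dividing by it gives the asymptotic form. -/

open Filter Finset Topology

theorem exists_eq_mul_one_add_of_tendsto_div {α 𝕜 : Type*} [Field 𝕜] [TopologicalSpace 𝕜]
    [IsTopologicalRing 𝕜] {l : Filter α} {f g : α → 𝕜} {C : 𝕜} (hC : C ≠ 0)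
    (h : Tendsto (fun n => f n / g n) l (𝓝 C)) :
    ∃ E : α → 𝕜, Tendsto E l (𝓝 0) ∧ ∀ n, g n ≠ 0 → f n = C * g n * (1 + E n) := by
  refine ⟨fun n => f n / g n / C - 1, ?_, fun n hn => ?_⟩
  · simpa [div_self hC] using (h.div_const C).sub_const 1
  · field_simp
    ring

section

variable {𝕜 : Type*} [Field 𝕜] [TopologicalSpace 𝕜] [CharZero 𝕜] [ContinuousSMul ℚ≥0 𝕜]
  [IsTopologicalSemiring 𝕜] [ContinuousInv₀ 𝕜]

theorem tendsto_natCast_add_div_natCast (c : 𝕜) :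
    Tendsto (fun n : ℕ => ((n : 𝕜) + c) / n) atTop (𝓝 1) := by
  simpa using (tendsto_natCast_div_add_atTop c).inv₀ one_ne_zero

theorem tendsto_choose_add_sub_one_div_pow (p : ℕ) :
    Tendsto (fun n : ℕ => ((n + p - 1).choose p : 𝕜) / (n : 𝕜) ^ p) atTop
      (𝓝 (p.factorial : 𝕜)⁻¹) := by
  have hprod : Tendsto (fun n : ℕ => ∏ i ∈ range p, ((n : 𝕜) + i) / n) atTop (𝓝 1) := by
    simpa using tendsto_finsetProd (range p) fun i _ => tendsto_natCast_add_div_natCast (i : 𝕜)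
  refine (one_div (p.factorial : 𝕜) ▸ hprod.div_const (p.factorial : 𝕜)).congr fun n => ?_
  have hasc : (p.factorial : 𝕜) * (n + p - 1).choose p = ∏ i ∈ range p, ((n : 𝕜) + i) := by
    exact_mod_cast (Nat.ascFactorial_eq_factorial_mul_choose' n p).symm.trans
      (Nat.ascFactorial_eq_prod_range n p)
  rw [prod_div_distrib, prod_const, card_range, ← hasc, mul_div_assoc,
    mul_div_cancel_left₀ _ (Nat.cast_ne_zero.2 p.factorial_ne_zero)]

end

theorem Jpoly_natCast_mul_div_pow {a : ℂ} {b : ℕ → ℂ} {β n : ℕ} (x : ℂ) (hn : n ≠ 0) :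
    Jpoly a b β n (n * x) / (n : ℂ) ^ (β - 1) =
      ∑ m ∈ Icc 1 β, b m / (m - 1).factorial * ∑ p ∈ range m,
        (-1 : ℂ) ^ p * p.factorial * (m - 1).choose p * a ^ (-(p : ℤ)) * x ^ (m - 1 - p) *
          (((n + p - 1).choose p : ℂ) / (n : ℂ) ^ p) * ((n : ℂ)⁻¹) ^ (β - m) := by
  have hn' : (n : ℂ) ≠ 0 := Nat.cast_ne_zero.2 hn
  rw [Jpoly, sum_div]
  refine sum_congr rfl fun m hm => ?_
  rw [mul_div_assoc, sum_div]
  refine congrArg _ (sum_congr rfl fun p hp => ?_)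
  obtain ⟨hm1, hmβ⟩ := mem_Icc.1 hm
  have hpm := mem_range.1 hp
  have hpow : (n : ℂ) ^ (β - 1) = (n : ℂ) ^ (m - 1 - p) * (n : ℂ) ^ p * (n : ℂ) ^ (β - m) := by
    rw [← pow_add, ← pow_add]; congr 1; omega
  rw [hpow, mul_pow, inv_pow]
  field_simp

theorem sum_range_neg_one_pow_mul_choose_mul_zpow {K : Type*} [Field K] {a : K} (ha : a ≠ 0)
    (x : K) (k : ℕ) :
    ∑ p ∈ range (k + 1), (-1 : K) ^ p * k.choose p * a ^ (-(p : ℤ)) * x ^ (k - p) =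
      ((a * x - 1) / a) ^ k := by
  have hsub : (a * x - 1) / a = -a⁻¹ + x := by field_simp; ring
  rw [hsub, add_pow]
  refine sum_congr rfl fun p _ => ?_
  rw [zpow_neg, zpow_natCast]
  ring

theorem tendsto_Jpoly_natCast_mul_div_pow {a : ℂ} (ha : a ≠ 0) (b : ℕ → ℂ) {β : ℕ}
    (hβ : 1 ≤ β) (x : ℂ) :
    Tendsto (fun n : ℕ => Jpoly a b β n (n * x) / (n : ℂ) ^ (β - 1)) atTop
      (𝓝 (b β / (β - 1).factorial * ((a * x - 1) / a) ^ (β - 1))) := by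
  rw [tendsto_congr' ((eventually_ne_atTop 0).mono fun n hn => Jpoly_natCast_mul_div_pow x hn)]
  have hlimit : b β / (β - 1).factorial * ((a * x - 1) / a) ^ (β - 1) =
      ∑ m ∈ Icc 1 β, b m / (m - 1).factorial * ∑ p ∈ range m,
        (-1 : ℂ) ^ p * p.factorial * (m - 1).choose p * a ^ (-(p : ℤ)) * x ^ (m - 1 - p) *
          (p.factorial : ℂ)⁻¹ * 0 ^ (β - m) := by
    rw [sum_eq_single_of_mem β (right_mem_Icc.2 hβ) fun m hm hmβ => ?_]
    · obtain ⟨k, rfl⟩ : ∃ k, β = k + 1 := ⟨β - 1, by omega⟩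
      simp only [Nat.add_sub_cancel, Nat.sub_self, pow_zero, mul_one]
      rw [← sum_range_neg_one_pow_mul_choose_mul_zpow ha x k]
      congr 1
      refine sum_congr rfl fun p _ => ?_
      have : (p.factorial : ℂ) ≠ 0 := Nat.cast_ne_zero.2 p.factorial_ne_zero
      field_simp
    · have hpos : β - m ≠ 0 := by have := (mem_Icc.1 hm).2; omega
      simp [zero_pow hpos]
  rw [hlimit]
  exact tendsto_finsetSum _ fun m _ => (tendsto_finsetSum _ fun p _ =>
    ((tendsto_choose_add_sub_one_div_pow p).const_mul _).mul
      (tendsto_inv_atTop_nhds_zero_nat.pow _)).const_mul _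

/-- For `a ≠ 0`, `β ≥ 1`, coefficients `b` with `b_β ≠ 0`, and any
`x ∈ ℂ`, `J_n(a; nx)/n^{β−1} → (b_β/(β−1)!)((ax−1)/a)^{β−1}` as `n → ∞`; in
particular, for `x ≠ 0` and `ax ≠ 1`,
`J_n(a;nx) = (b_β/(β−1)!) (nx)^{β−1} ((ax−1)/(ax))^{β−1} (1+o(1))`, so `J_n(a;nx)`
has exact order `n^{β−1}`. -/
theorem stmt_10 (a : ℂ) (ha : a ≠ 0) (β : ℕ) (hβ : 1 ≤ β) (b : ℕ → ℂ)
    (hbβ : b β ≠ 0) (x : ℂ) :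
    Filter.Tendsto (fun n : ℕ => Jpoly a b β n ((n : ℂ) * x) / (n : ℂ) ^ (β - 1))
      Filter.atTop
      (nhds ((b β / (Nat.factorial (β - 1) : ℂ)) * ((a * x - 1) / a) ^ (β - 1))) ∧
    (x ≠ 0 → a * x ≠ 1 →
      ∃ E : ℕ → ℂ, Filter.Tendsto E Filter.atTop (nhds 0) ∧
        ∀ n : ℕ, 1 ≤ n →
          Jpoly a b β n ((n : ℂ) * x) =
            (b β / (Nat.factorial (β - 1) : ℂ)) * ((n : ℂ) * x) ^ (β - 1) *
              ((a * x - 1) / (a * x)) ^ (β - 1) * (1 + E n)) := by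
  have hlim := tendsto_Jpoly_natCast_mul_div_pow ha b hβ x
  refine ⟨hlim, fun hx hax => ?_⟩
  have hC : b β / (β - 1).factorial * ((a * x - 1) / a) ^ (β - 1) ≠ 0 :=
    mul_ne_zero (div_ne_zero hbβ (Nat.cast_ne_zero.2 (Nat.factorial_ne_zero _)))
      (pow_ne_zero _ (div_ne_zero (sub_ne_zero.2 hax) ha))
  obtain ⟨E, hE, hJ⟩ := exists_eq_mul_one_add_of_tendsto_div hC hlim
  refine ⟨E, hE, fun n hn => ?_⟩
  rw [hJ n (pow_ne_zero _ (Nat.cast_ne_zero.2 (by omega))), mul_assoc _ _ ((n : ℂ) ^ _),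
    mul_assoc _ ((n * x : ℂ) ^ _), ← mul_pow, ← mul_pow]
  congr 3
  field_simp
end

section
/- Let a and b be distinct nonzero complex numbers and let x ∈ ℂ with x ≠ 0. Then |φ(a x)| = |φ(b x)| if and only if Re((b − a) x) = ln|b| − ln|a|. Consequently, the set {x ∈ ℂ : x ≠ 0 and |φ(a x)| = |φ(b x)|} is contained in a real line in the complex plane. -/
/-! Since `log |φ(w)| = log |w| + 1 - Re w` for `w ≠ 0`, comparing `|φ(ax)|` with `|φ(bx)|` is
comparing these logarithms, in which the terms `log |x|` and `1` cancel. -/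

open Complex

lemma log_norm_mul_exp_one_sub {w : ℂ} (hw : w ≠ 0) :
    Real.log ‖w * exp (1 - w)‖ = Real.log ‖w‖ + 1 - w.re := by
  rw [norm_mul, norm_exp, Real.log_mul (norm_ne_zero_iff.mpr hw) (Real.exp_ne_zero _),
    Real.log_exp, sub_re, one_re]
  ring

lemma norm_mul_exp_one_sub_eq_iff {v w : ℂ} (hv : v ≠ 0) (hw : w ≠ 0) :
    ‖v * exp (1 - v)‖ = ‖w * exp (1 - w)‖ ↔ w.re - v.re = Real.log ‖w‖ - Real.log ‖v‖ := by
  have hpos : ∀ {u : ℂ}, u ≠ 0 → 0 < ‖u * exp (1 - u)‖ := fun hu =>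
    norm_pos_iff.mpr (mul_ne_zero hu (exp_ne_zero _))
  rw [← Real.log_injOn_pos.eq_iff (hpos hv) (hpos hw), log_norm_mul_exp_one_sub hv,
    log_norm_mul_exp_one_sub hw]
  constructor <;> intro h <;> linarith

lemma norm_mul_mul_exp_one_sub_eq_iff {a b x : ℂ} (ha : a ≠ 0) (hb : b ≠ 0) (hx : x ≠ 0) :
    ‖a * x * exp (1 - a * x)‖ = ‖b * x * exp (1 - b * x)‖ ↔
      ((b - a) * x).re = Real.log ‖b‖ - Real.log ‖a‖ := by
  have hlog : ∀ {c : ℂ}, c ≠ 0 → Real.log ‖c * x‖ = Real.log ‖c‖ + Real.log ‖x‖ := fun hc => by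
    rw [norm_mul, Real.log_mul (norm_ne_zero_iff.mpr hc) (norm_ne_zero_iff.mpr hx)]
  rw [norm_mul_exp_one_sub_eq_iff (mul_ne_zero ha hx) (mul_ne_zero hb hx), hlog ha, hlog hb,
    sub_mul, sub_re]
  constructor <;> intro h <;> linarith

theorem stmt_11_general (a b : ℂ) (ha : a ≠ 0) (hb : b ≠ 0)
    (x : ℂ) (hx : x ≠ 0) :
    (‖a * x * Complex.exp (1 - a * x)‖ =
        ‖b * x * Complex.exp (1 - b * x)‖ ↔
      ((b - a) * x).re = Real.log ‖b‖ - Real.log ‖a‖) ∧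
    {z : ℂ | z ≠ 0 ∧ ‖a * z * Complex.exp (1 - a * z)‖ =
        ‖b * z * Complex.exp (1 - b * z)‖} ⊆
      {z : ℂ | ((b - a) * z).re =
        Real.log ‖b‖ - Real.log ‖a‖} :=
  ⟨norm_mul_mul_exp_one_sub_eq_iff ha hb hx,
    fun _ ⟨hz, hnorm⟩ => (norm_mul_mul_exp_one_sub_eq_iff ha hb hz).mp hnorm⟩

/-- For distinct nonzero `a, b` and `x ≠ 0`, with `φ(z) = z e^{1−z}`:
`|φ(ax)| = |φ(bx)|` iff `Re((b−a)x) = ln|b| − ln|a|`; consequently the set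
`{x ≠ 0 : |φ(ax)| = |φ(bx)|}` is contained in the real line
`{z : Re((b−a)z) = ln|b| − ln|a|}`. -/
theorem stmt_11 (a b : ℂ) (ha : a ≠ 0) (hb : b ≠ 0) (hab : a ≠ b)
    (x : ℂ) (hx : x ≠ 0) :
    (‖a * x * Complex.exp (1 - a * x)‖ =
        ‖b * x * Complex.exp (1 - b * x)‖ ↔
      ((b - a) * x).re = Real.log ‖b‖ - Real.log ‖a‖) ∧
    {z : ℂ | z ≠ 0 ∧ ‖a * z * Complex.exp (1 - a * z)‖ =
        ‖b * z * Complex.exp (1 - b * z)‖} ⊆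
      {z : ℂ | ((b - a) * z).re =
        Real.log ‖b‖ - Real.log ‖a‖} :=
  stmt_11_general a b ha hb x hx
end

section
/- Let S = {z ∈ ℂ : |φ(z)| = 1 and |z| ≤ 1} be the Szegő curve. For any two distinct nonzero complex numbers a and b, the set {x ∈ ℂ : a x ∈ S and b x ∈ S} (i.e., the intersection of the scaled Szegő curves (1/a)S and (1/b)S) contains at most two points. -/
/-!
If `a x` and `b x` both lie on `S`, then `log ‖z‖ = Re z - 1` at `z = a x` and `z = b x` gives
`Re ((a - b) x) = log ‖a‖ - log ‖b‖`, so `a x` lies on a fixed line, and it suffices that every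
line meets `S` in at most two points. A vertical line `Re z = r` meets `S` only on the circle
`‖z‖ = e^{r - 1}`. A non-vertical line through `1 + n i` is `z(t) = (1 + t) + (n + m t) i`, and its
points on `S` are the zeros in `t ≤ 0` of `H(t) = ‖z(t)‖² - e^{2t}`. Since `H''' = -8 e^{2t} < 0`,
three zeros `s₁ < s₂ < s₃ ≤ 0` force `H' < 0` on `[s₃, ∞)`. This is impossible: if `s₃ < 0`
then `n² = H(0) < H(s₃) = 0`, and if `s₃ = 0` then `n = 0`, so `H'(0) = 2 m n = 0`.
-/

/-- The Szegő curve `S = {z : |z e^{1−z}| = 1 ∧ |z| ≤ 1}`. -/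
def SzegoCurve : Set ℂ :=
  {z : ℂ | ‖z * Complex.exp (1 - z)‖ = 1 ∧ ‖z‖ ≤ 1}

open Real Set

theorem norm_eq_exp_of_mem_szegoCurve {z : ℂ} (hz : z ∈ SzegoCurve) :
    ‖z‖ = exp (z.re - 1) := by
  have h := hz.1
  rw [norm_mul, Complex.norm_exp, Complex.sub_re, Complex.one_re] at h
  calc ‖z‖ = ‖z‖ * exp (1 - z.re) * exp (z.re - 1) := by rw [mul_assoc, ← exp_add]; simp
    _ = exp (z.re - 1) := by rw [h, one_mul]

theorem ne_zero_of_mem_szegoCurve {z : ℂ} (hz : z ∈ SzegoCurve) : z ≠ 0 :=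
  norm_pos_iff.1 (norm_eq_exp_of_mem_szegoCurve hz ▸ exp_pos _)

theorem re_le_one_of_mem_szegoCurve {z : ℂ} (hz : z ∈ SzegoCurve) : z.re ≤ 1 := by
  have h := hz.2
  rw [norm_eq_exp_of_mem_szegoCurve hz, exp_le_one_iff] at h
  linarith

theorem re_sq_add_im_sq_of_mem_szegoCurve {z : ℂ} (hz : z ∈ SzegoCurve) :
    z.re ^ 2 + z.im ^ 2 = exp (2 * (z.re - 1)) := by
  rw [← Complex.sq_norm_sub_sq_re, norm_eq_exp_of_mem_szegoCurve hz, ← exp_nat_mul]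
  push_cast
  ring

theorem exists_subset_pair_of_forall_not_lt_lt {α : Type*} [LinearOrder α] [Nonempty α]
    {s : Set α} (h : ∀ x ∈ s, ∀ y ∈ s, ∀ z ∈ s, x < y → y < z → False) :
    ∃ p q : α, s ⊆ {p, q} := by
  rcases s.subsingleton_or_nontrivial with hs | hs
  · rcases hs.eq_empty_or_singleton with rfl | ⟨p, rfl⟩
    · exact ⟨Classical.arbitrary α, Classical.arbitrary α, empty_subset _⟩
    · exact ⟨p, p, subset_insert p {p}⟩
  obtain ⟨p, hp, q, hq, hpq⟩ := hs.exists_lt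
  refine ⟨p, q, fun z hz => ?_⟩
  rcases lt_trichotomy z p with hzp | rfl | hpz
  · exact (h z hz p hp q hq hzp hpq).elim
  · exact Or.inl rfl
  rcases lt_trichotomy z q with hzq | rfl | hqz
  · exact (h p hp z hz q hq hpz hzq).elim
  · exact Or.inr rfl
  · exact (h p hp q hq z hz hpq hqz).elim

theorem neg_of_three_eq_values_of_strictAnti_snd_deriv {f f' f'' : ℝ → ℝ}
    (hf : ∀ t, HasDerivAt f (f' t) t) (hf' : ∀ t, HasDerivAt f' (f'' t) t)
    (hf'' : StrictAnti f'') {s₁ s₂ s₃ : ℝ} (h₁₂ : s₁ < s₂) (h₂₃ : s₂ < s₃)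
    (hfs₁₂ : f s₁ = f s₂) (hfs₂₃ : f s₂ = f s₃) {t : ℝ} (ht : s₃ ≤ t) : f' t < 0 := by
  have hfc : Continuous f := continuous_iff_continuousAt.2 fun t => (hf t).continuousAt
  have hf'c : Continuous f' := continuous_iff_continuousAt.2 fun t => (hf' t).continuousAt
  obtain ⟨u₁, hu₁, hf'u₁⟩ :=
    exists_hasDerivAt_eq_zero h₁₂ hfc.continuousOn hfs₁₂ fun x _ => hf x
  obtain ⟨u₂, hu₂, hf'u₂⟩ :=
    exists_hasDerivAt_eq_zero h₂₃ hfc.continuousOn hfs₂₃ fun x _ => hf x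
  obtain ⟨v, hv, hf''v⟩ := exists_hasDerivAt_eq_zero (hu₁.2.trans hu₂.1) hf'c.continuousOn
    (hf'u₁.trans hf'u₂.symm) fun x _ => hf' x
  have hanti : StrictAntiOn f' (Ici v) :=
    strictAntiOn_of_hasDerivWithinAt_neg (convex_Ici v) hf'c.continuousOn
      (fun x _ => (hf' x).hasDerivWithinAt) fun x hx => by
        rw [interior_Ici] at hx
        exact hf''v ▸ hf'' hx
  calc f' t < f' u₂ := hanti hv.2.le (hv.2.trans (hu₂.2.trans_le ht)).le (hu₂.2.trans_le ht)
    _ = 0 := hf'u₂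

/-- Along `z(t) = (1 + t) + (n + m t) i` this is `‖z(t)‖² - e^{2 (Re z(t) - 1)}`. -/
noncomputable def szegoDefect (m n t : ℝ) : ℝ :=
  (1 + t) ^ 2 + (n + m * t) ^ 2 - exp (2 * t)

theorem hasDerivAt_szegoDefect (m n t : ℝ) :
    HasDerivAt (szegoDefect m n) (2 * (1 + t) + 2 * m * (n + m * t) - 2 * exp (2 * t)) t := by
  have h := ((((hasDerivAt_id t).const_add 1).pow 2).add
    ((((hasDerivAt_id t).const_mul m).const_add n).pow 2)).sub
    ((hasDerivAt_id t).const_mul 2).exp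
  exact h.congr_deriv <| by
    simp only [Nat.cast_ofNat, id_eq, Nat.add_one_sub_one, pow_one, mul_one]
    ring

theorem hasDerivAt_deriv_szegoDefect (m n t : ℝ) :
    HasDerivAt (fun t => 2 * (1 + t) + 2 * m * (n + m * t) - 2 * exp (2 * t))
      (2 + 2 * m ^ 2 - 4 * exp (2 * t)) t := by
  have h := ((((hasDerivAt_id t).const_add 1).const_mul 2).add
    ((((hasDerivAt_id t).const_mul m).const_add n).const_mul (2 * m))).sub
    (((hasDerivAt_id t).const_mul 2).exp.const_mul 2)
  exact h.congr_deriv (by simp only [mul_one, id_eq]; ring)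

theorem szegoDefect_not_three_nonpos_zeros (m n : ℝ) {s₁ s₂ s₃ : ℝ} (h₁₂ : s₁ < s₂)
    (h₂₃ : s₂ < s₃) (hs₃ : s₃ ≤ 0) (hH₁ : szegoDefect m n s₁ = 0)
    (hH₂ : szegoDefect m n s₂ = 0) (hH₃ : szegoDefect m n s₃ = 0) : False := by
  have hH' : ∀ t, s₃ ≤ t → 2 * (1 + t) + 2 * m * (n + m * t) - 2 * exp (2 * t) < 0 :=
    fun t => neg_of_three_eq_values_of_strictAnti_snd_deriv (hasDerivAt_szegoDefect m n)
      (hasDerivAt_deriv_szegoDefect m n)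
      (fun x y hxy => by linarith [exp_lt_exp.2 (by linarith : 2 * x < 2 * y)])
      h₁₂ h₂₃ (hH₁.trans hH₂.symm) (hH₂.trans hH₃.symm)
  have hH0 : szegoDefect m n 0 = n ^ 2 := by simp [szegoDefect]
  rcases hs₃.lt_or_eq with hs₃ | rfl
  · have hanti : StrictAntiOn (szegoDefect m n) (Icc s₃ 0) :=
      strictAntiOn_of_hasDerivWithinAt_neg (convex_Icc s₃ 0)
        (fun x _ => (hasDerivAt_szegoDefect m n x).continuousAt.continuousWithinAt)
        (fun x _ => (hasDerivAt_szegoDefect m n x).hasDerivWithinAt) fun x hx => by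
          rw [interior_Icc] at hx
          exact hH' x hx.1.le
    have h0 := hanti (left_mem_Icc.2 hs₃.le) (right_mem_Icc.2 hs₃.le) hs₃
    rw [hH0, hH₃] at h0
    exact (sq_nonneg n).not_gt h0
  · have hn : n = 0 := (pow_eq_zero_iff two_ne_zero).1 (hH0.symm.trans hH₃)
    simpa [hn] using hH' 0 le_rfl

theorem exists_nonpos_zeros_szegoDefect_subset_pair (m n : ℝ) :
    ∃ t₁ t₂ : ℝ, {t | t ≤ 0 ∧ szegoDefect m n t = 0} ⊆ {t₁, t₂} :=
  exists_subset_pair_of_forall_not_lt_lt fun _ hs₁ _ hs₂ _ hs₃ h₁₂ h₂₃ =>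
    szegoDefect_not_three_nonpos_zeros m n h₁₂ h₂₃ hs₃.1 hs₁.2 hs₂.2 hs₃.2

theorem exists_szegoCurve_inter_re_eq_subset_pair (r : ℝ) :
    ∃ z₁ z₂ : ℂ, SzegoCurve ∩ {z | z.re = r} ⊆ {z₁, z₂} := by
  rcases (SzegoCurve ∩ {z | z.re = r}).eq_empty_or_nonempty with h | ⟨w, hw, hwr⟩
  · exact ⟨0, 0, h.subset.trans (empty_subset _)⟩
  refine ⟨w, (starRingEnd ℂ) w, fun z ⟨hz, hzr⟩ => ?_⟩
  have him : z.im ^ 2 = w.im ^ 2 := by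
    have hz' := re_sq_add_im_sq_of_mem_szegoCurve hz
    have hw' := re_sq_add_im_sq_of_mem_szegoCurve hw
    rw [hzr] at hz'
    rw [show w.re = r from hwr] at hw'
    linarith
  rcases sq_eq_sq_iff_eq_or_eq_neg.1 him with h | h
  · exact Or.inl (Complex.ext (hzr.trans hwr.symm) h)
  · exact Or.inr (Complex.ext (by simpa using hzr.trans hwr.symm) (by simpa using h))

theorem exists_szegoCurve_inter_nonvertical_line_subset_pair (m n : ℝ) :
    ∃ z₁ z₂ : ℂ, SzegoCurve ∩ {z | z.im = n + m * (z.re - 1)} ⊆ {z₁, z₂} := by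
  obtain ⟨t₁, t₂, ht⟩ := exists_nonpos_zeros_szegoDefect_subset_pair m n
  let γ : ℝ → ℂ := fun t => ⟨1 + t, n + m * t⟩
  refine ⟨γ t₁, γ t₂, fun z ⟨hz, hzl⟩ => image_pair γ t₁ t₂ ▸ image_mono ht ⟨z.re - 1, ?_, ?_⟩⟩
  · refine ⟨by linarith [re_le_one_of_mem_szegoCurve hz], ?_⟩
    rw [szegoDefect, ← hzl, add_sub_cancel]
    exact sub_eq_zero.2 (re_sq_add_im_sq_of_mem_szegoCurve hz)
  · exact Complex.ext (add_sub_cancel _ _) hzl.symm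

theorem exists_szegoCurve_inter_line_subset_pair {u : ℂ} (hu : u ≠ 0) (c : ℝ) :
    ∃ z₁ z₂ : ℂ, SzegoCurve ∩ {z | (u * z).re = c} ⊆ {z₁, z₂} := by
  rcases eq_or_ne u.im 0 with him | him
  · have hre : u.re ≠ 0 := fun hre => hu (Complex.ext hre him)
    obtain ⟨z₁, z₂, h⟩ := exists_szegoCurve_inter_re_eq_subset_pair (c / u.re)
    refine ⟨z₁, z₂, (inter_subset_inter_right _ fun z (hz : (u * z).re = c) => ?_).trans h⟩
    rw [Complex.mul_re, him, zero_mul, sub_zero] at hz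
    exact eq_div_of_mul_eq hre (by linarith)
  · obtain ⟨z₁, z₂, h⟩ :=
      exists_szegoCurve_inter_nonvertical_line_subset_pair (u.re / u.im) ((u.re - c) / u.im)
    refine ⟨z₁, z₂, (inter_subset_inter_right _ fun z (hz : (u * z).re = c) => ?_).trans h⟩
    rw [Complex.mul_re] at hz
    show z.im = (u.re - c) / u.im + u.re / u.im * (z.re - 1)
    field_simp
    linarith

theorem re_sub_mul_eq_log_sub_log {a b x : ℂ} (ha : a ≠ 0) (hb : b ≠ 0)
    (hax : a * x ∈ SzegoCurve) (hbx : b * x ∈ SzegoCurve) :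
    ((a - b) * x).re = log ‖a‖ - log ‖b‖ := by
  have hx : x ≠ 0 := right_ne_zero_of_mul (ne_zero_of_mem_szegoCurve hax)
  have hlog : ∀ {c : ℂ}, c ≠ 0 → c * x ∈ SzegoCurve → log ‖c‖ + log ‖x‖ = (c * x).re - 1 :=
    fun hc hcx => by
      rw [← log_mul (norm_ne_zero_iff.2 hc) (norm_ne_zero_iff.2 hx), ← norm_mul,
        norm_eq_exp_of_mem_szegoCurve hcx, log_exp]
  rw [sub_mul, Complex.sub_re]
  linarith [hlog ha hax, hlog hb hbx]

/-- For any two distinct nonzero complex numbers `a` and `b`, the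
intersection of the scaled Szegő curves `(1/a)S` and `(1/b)S`, i.e. the set
`{x : ax ∈ S ∧ bx ∈ S}`, contains at most two points. -/
theorem stmt_12 (a b : ℂ) (ha : a ≠ 0) (hb : b ≠ 0) (hab : a ≠ b) :
    ∃ p q : ℂ, {x : ℂ | a * x ∈ SzegoCurve ∧ b * x ∈ SzegoCurve} ⊆ {p, q} := by
  obtain ⟨z₁, z₂, h⟩ :=
    exists_szegoCurve_inter_line_subset_pair (div_ne_zero (sub_ne_zero.2 hab) ha)
      (log ‖a‖ - log ‖b‖)
  refine ⟨z₁ / a, z₂ / a, fun x ⟨hax, hbx⟩ => ?_⟩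
  have hline : ((a - b) / a * (a * x)).re = log ‖a‖ - log ‖b‖ := by
    rw [show (a - b) / a * (a * x) = (a - b) * x by field_simp]
    exact re_sub_mul_eq_log_sub_log ha hb hax hbx
  rcases h ⟨hax, hline⟩ with h | h
  · exact Or.inl ((eq_div_iff ha).2 (by rw [mul_comm, h]))
  · exact Or.inr ((eq_div_iff ha).2 (by rw [mul_comm, h]))
end

section
/- Let w_0 be the unique positive real number satisfying w_0 e^{w_0} = e^{−1} (that is, w_0 = W(e^{−1}) where W is the principal branch of the Lambert W-function). Then: (i) for every z ∈ ℂ with |z| < w_0 one has |z e^{1−z}| < 1; (ii) if a' ∈ Z(g) with |a'| > r_0/w_0, then for every b ∈ Z(g) with |b| = r_0 the point b/a' lies in the connected component of 0 of the open set {z ∈ ℂ : |z e^{1−z}| < 1}, so a' is a non-dominant zero of g; in particular every dominant zero a of g satisfies |a| ≤ r_0/w_0, and g has only finitely many dominant zeros. -/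
/-- `φ(z) = z e^{1−z}`. -/
noncomputable def phiF (z : ℂ) : ℂ := z * Complex.exp (1 - z)

/-- The open interior of the Szegő curve: the connected component of `0` in
`{z : |φ(z)| < 1}`. -/
noncomputable def IntSzego : Set ℂ :=
  connectedComponentIn {z : ℂ | ‖phiF z‖ < 1} 0

/-- `a` is a dominant zero of `g` (with minimal zero modulus `r₀`) if `g a = 0` and
either `|a| = r₀` or `b/a ∉ Int(S)` for every zero `b` of `g` of modulus `r₀`. -/
def IsDominant (g : ℂ → ℂ) (r0 : ℝ) (a : ℂ) : Prop :=
  g a = 0 ∧ (‖a‖ = r0 ∨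
    ∀ b : ℂ, g b = 0 → ‖b‖ = r0 → b / a ∉ IntSzego)

/-!
On `|z| < w₀` we have `|z e^{1−z}| = |z| e^{1 − Re z} ≤ |z| e^{1+|z|} < w₀ e^{1+w₀} = 1`, so the
disc of radius `w₀` is a connected subset of `{|φ| < 1}` containing `0`, hence lies in `Int(S)`.
If `|a'| > r₀/w₀` and `|b| = r₀`, then `|b/a'| < w₀`, so `b/a' ∈ Int(S)`; since `w₀ < 1`, also
`|a'| > r₀`, so `a'` is not dominant. Dominant zeros thus lie in a compact disc, where the zeros
of an entire function that is not identically zero are finite in number.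
-/

open Complex Metric Set Filter

theorem norm_mul_exp_one_sub_le (z : ℂ) :
    ‖z * exp (1 - z)‖ ≤ ‖z‖ * Real.exp (1 + ‖z‖) := by
  rw [norm_mul, norm_exp, sub_re, one_re]
  gcongr
  linarith [neg_le_abs z.re, abs_re_le_norm z]

section LambertPoint

variable {w : ℝ}

theorem pos_of_mul_exp_eq_exp_neg_one (hw : w * Real.exp w = Real.exp (-1)) : 0 < w :=
  pos_of_mul_pos_left (hw ▸ Real.exp_pos (-1)) (Real.exp_pos w).le

theorem lt_one_of_mul_exp_eq_exp_neg_one (hw : w * Real.exp w = Real.exp (-1)) : w < 1 := by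
  by_contra! h
  have : Real.exp 1 ≤ w * Real.exp w :=
    calc Real.exp 1 = 1 * Real.exp 1 := (one_mul _).symm
      _ ≤ w * Real.exp w := by gcongr
  linarith [Real.exp_lt_exp.2 (show (-1 : ℝ) < 1 by norm_num)]

theorem mul_exp_one_add_eq_one (hw : w * Real.exp w = Real.exp (-1)) :
    w * Real.exp (1 + w) = 1 := by
  rw [Real.exp_add, mul_left_comm, hw, ← Real.exp_add, add_neg_cancel, Real.exp_zero]

theorem norm_mul_exp_one_sub_lt_one (hw : w * Real.exp w = Real.exp (-1)) {z : ℂ}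
    (hz : ‖z‖ < w) : ‖z * exp (1 - z)‖ < 1 :=
  calc ‖z * exp (1 - z)‖ ≤ ‖z‖ * Real.exp (1 + ‖z‖) := norm_mul_exp_one_sub_le z
    _ < w * Real.exp (1 + w) := by gcongr
    _ = 1 := mul_exp_one_add_eq_one hw

theorem ball_subset_intSzego (hw : w * Real.exp w = Real.exp (-1)) :
    ball 0 w ⊆ IntSzego :=
  (convex_ball (0 : ℂ) w).isPreconnected.subset_connectedComponentIn
    (mem_ball_self (pos_of_mul_exp_eq_exp_neg_one hw))
    fun _ hz ↦ norm_mul_exp_one_sub_lt_one hw (mem_ball_zero_iff.1 hz)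

theorem div_mem_intSzego (hw : w * Real.exp w = Real.exp (-1)) {a b : ℂ}
    (hab : ‖b‖ < w * ‖a‖) : b / a ∈ IntSzego := by
  have ha : 0 < ‖a‖ := pos_of_mul_pos_right ((norm_nonneg b).trans_lt hab)
    (pos_of_mul_exp_eq_exp_neg_one hw).le
  refine ball_subset_intSzego hw (mem_ball_zero_iff.2 ?_)
  rwa [norm_div, div_lt_iff₀ ha]

end LambertPoint

theorem AnalyticOnNhd.finite_inter_zeros_of_isCompact {𝕜 E : Type*} [NontriviallyNormedField 𝕜]
    [NormedAddCommGroup E] [NormedSpace 𝕜 E] {f : 𝕜 → E} {U K : Set 𝕜} {z₀ : 𝕜}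
    (hf : AnalyticOnNhd 𝕜 f U) (hU : IsPreconnected U) (hz₀ : z₀ ∈ U) (hfz₀ : f z₀ ≠ 0)
    (hK : IsCompact K) (hKU : K ⊆ U) : (K ∩ f ⁻¹' {0}).Finite := by
  have hne : ∀ᶠ z in codiscreteWithin U, f z ≠ 0 :=
    (hf.eqOn_zero_or_eventually_ne_zero_of_preconnected hU).resolve_left fun h ↦ hfz₀ (h hz₀)
  simpa [sdiff_eq, preimage, compl_ofPred] using
    hK.finite_sdiff_of_mem_codiscreteWithin (codiscreteWithin_mono hKU hne)

theorem stmt_13_general (g : ℂ → ℂ) (hg : Differentiable ℂ g) (hg0 : g 0 ≠ 0)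
    (r0 : ℝ)
    (hr0 : IsLeast {r : ℝ | ∃ a : ℂ, g a = 0 ∧ ‖a‖ = r} r0)
    (w0 : ℝ) (hw0 : w0 * Real.exp w0 = Real.exp (-1)) :
    (∀ z : ℂ, ‖z‖ < w0 → ‖z * Complex.exp (1 - z)‖ < 1) ∧
    (∀ a' : ℂ, g a' = 0 → r0 / w0 < ‖a'‖ →
      (∀ b : ℂ, g b = 0 → ‖b‖ = r0 → b / a' ∈ IntSzego) ∧
      ¬ IsDominant g r0 a') ∧
    (∀ a : ℂ, IsDominant g r0 a → ‖a‖ ≤ r0 / w0) ∧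
    {a : ℂ | IsDominant g r0 a}.Finite := by
  have hw0pos := pos_of_mul_exp_eq_exp_neg_one hw0
  obtain ⟨b₀, hb₀, hb₀r⟩ := hr0.1
  have hquot : ∀ a' : ℂ, r0 / w0 < ‖a'‖ → ∀ b : ℂ, ‖b‖ = r0 → b / a' ∈ IntSzego :=
    fun a' ha' b hb ↦ div_mem_intSzego hw0 (hb ▸ (div_lt_iff₀' hw0pos).1 ha')
  have hnondom : ∀ a' : ℂ, r0 / w0 < ‖a'‖ → ¬ IsDominant g r0 a' := by
    rintro a' ha' ⟨-, hnorm | hnot⟩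
    · have : r0 ≤ r0 / w0 :=
        le_div_self (hb₀r ▸ norm_nonneg b₀) hw0pos (lt_one_of_mul_exp_eq_exp_neg_one hw0).le
      linarith
    · exact hnot b₀ hb₀ hb₀r (hquot a' ha' b₀ hb₀r)
  have hbound : ∀ a, IsDominant g r0 a → ‖a‖ ≤ r0 / w0 :=
    fun a ha ↦ not_lt.1 fun h ↦ hnondom a h ha
  refine ⟨fun _ ↦ norm_mul_exp_one_sub_lt_one hw0,
    fun a' _ ha' ↦ ⟨fun b _ ↦ hquot a' ha' b, hnondom a' ha'⟩, hbound, ?_⟩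
  exact ((analyticOnNhd_univ_iff_differentiable.2 hg).finite_inter_zeros_of_isCompact
    isPreconnected_univ (mem_univ 0) hg0 (isCompact_closedBall 0 (r0 / w0))
    (subset_univ _)).subset fun a ha ↦ ⟨mem_closedBall_zero_iff.2 (hbound a ha), ha.1⟩

/-- Let `w₀ > 0` satisfy `w₀ e^{w₀} = e^{−1}` (`w₀ = W(e^{−1})`).
Then (i) `|z| < w₀` implies `|z e^{1−z}| < 1`; (ii) any zero `a'` of `g` with
`|a'| > r₀/w₀` has `b/a' ∈ Int(S)` for every zero `b` of modulus `r₀`, hence is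
non-dominant; in particular every dominant zero `a` satisfies `|a| ≤ r₀/w₀` and `g`
has only finitely many dominant zeros. -/
theorem stmt_13 (g : ℂ → ℂ) (hg : Differentiable ℂ g) (hg0 : g 0 ≠ 0)
    (r0 : ℝ) (hr0pos : 0 < r0)
    (hr0 : IsLeast {r : ℝ | ∃ a : ℂ, g a = 0 ∧ ‖a‖ = r} r0)
    (w0 : ℝ) (hw0pos : 0 < w0) (hw0 : w0 * Real.exp w0 = Real.exp (-1)) :
    (∀ z : ℂ, ‖z‖ < w0 → ‖z * Complex.exp (1 - z)‖ < 1) ∧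
    (∀ a' : ℂ, g a' = 0 → r0 / w0 < ‖a'‖ →
      (∀ b : ℂ, g b = 0 → ‖b‖ = r0 → b / a' ∈ IntSzego) ∧
      ¬ IsDominant g r0 a') ∧
    (∀ a : ℂ, IsDominant g r0 a → ‖a‖ ≤ r0 / w0) ∧
    {a : ℂ | IsDominant g r0 a}.Finite :=
  stmt_13_general g hg hg0 r0 hr0 w0 hw0
end

section
/- Let a' ∈ ℂ with a' ≠ 0, let β ≥ 1 be an integer, let b_1, …, b_β ∈ ℂ, and let ρ > 0 satisfy |a'| ≤ ρ and 1/|a'| ≤ ρ. Let δ > 0 satisfy 2δρ ≤ 1/2. For each integer n ≥ 1 and x ∈ ℂ set σ_n(x) = Σ_{m=1}^{β} (b_m/(m−1)!) · (∂/∂w)^{m−1} [ w^{−n} S_{n−1}(n w x) ] evaluated at w = a'. Then there exists K > 0, independent of n and x, such that for all n ≥ 1 and all x ∈ ℂ with |x − 1/a'| ≤ δ, |σ_n(x)| ≤ K · |e x|^n · e^{6 n δ ρ}. -/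
/-!
Cauchy's estimate on the circle of radius `R = δρ‖a'‖/2` about `a'` bounds the `b_m / (m-1)!`-weighted
derivatives by `∑ ‖b_m‖ / R^(m-1)` times the maximum of `f(w) = w^(-n) S_{n-1}(nwx)` on that circle; this
factor does not depend on `n` or `x`. On the circle `‖f w‖ ≤ (exp (‖w‖‖x‖) / ‖w‖)^n`, and since both
`‖w‖/‖a'‖` and `‖x‖‖a'‖` lie within `δρ` of `1`, one gets `exp (‖w‖‖x‖) / ‖w‖ ≤ e ‖x‖ exp (6δρ)`.
-/

open Metric Finset

lemma norm_sum_range_pow_div_factorial_le (z : ℂ) (N : ℕ) :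
    ‖∑ k ∈ range N, z ^ k / (k.factorial : ℂ)‖ ≤ Real.exp ‖z‖ :=
  calc ‖∑ k ∈ range N, z ^ k / (k.factorial : ℂ)‖
      ≤ ∑ k ∈ range N, ‖z‖ ^ k / (k.factorial : ℝ) := by
        refine (norm_sum_le _ _).trans_eq (sum_congr rfl fun k _ => ?_)
        rw [norm_div, norm_pow, Complex.norm_natCast]
    _ ≤ Real.exp ‖z‖ := Real.sum_le_exp_of_nonneg (norm_nonneg z) N

lemma norm_zpow_neg_mul_sum_range_le (n : ℕ) (w x : ℂ) :
    ‖w ^ (-(n : ℤ)) * ∑ k ∈ range n, ((n : ℂ) * w * x) ^ k / (k.factorial : ℂ)‖ ≤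
      (Real.exp (‖w‖ * ‖x‖) / ‖w‖) ^ n := by
  have hexp : Real.exp ‖(n : ℂ) * w * x‖ = Real.exp (‖w‖ * ‖x‖) ^ n := by
    rw [norm_mul, norm_mul, Complex.norm_natCast, mul_assoc, Real.exp_nat_mul]
  rw [norm_mul, norm_zpow, zpow_neg, zpow_natCast, div_pow, div_eq_inv_mul _ (‖w‖ ^ n), ← hexp]
  exact mul_le_mul_of_nonneg_left (norm_sum_range_pow_div_factorial_le _ n) (by positivity)

lemma norm_sum_mul_iteratedDeriv_div_factorial_le {f : ℂ → ℂ} {c : ℂ} {R C : ℝ} (hR : 0 < R)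
    (hf : DiffContOnCl ℂ f (ball c R)) (hC : ∀ z ∈ sphere c R, ‖f z‖ ≤ C)
    (s : Finset ℕ) (b : ℕ → ℂ) (d : ℕ → ℕ) :
    ‖∑ m ∈ s, b m / ((d m).factorial : ℂ) * iteratedDeriv (d m) f c‖ ≤
      (∑ m ∈ s, ‖b m‖ / R ^ d m) * C := by
  rw [sum_mul]
  refine (norm_sum_le _ _).trans (sum_le_sum fun m _ => ?_)
  have hfac : (0 : ℝ) < (d m).factorial := mod_cast (d m).factorial_pos
  have hcauchy := Complex.norm_iteratedDeriv_le_of_forall_mem_sphere_norm_le (d m) hR hf hC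
  rw [norm_mul, norm_div, Complex.norm_natCast, div_mul_eq_mul_div, div_le_iff₀ hfac]
  calc ‖b m‖ * ‖iteratedDeriv (d m) f c‖ ≤ ‖b m‖ * ((d m).factorial * C / R ^ d m) :=
        mul_le_mul_of_nonneg_left hcauchy (norm_nonneg _)
    _ = ‖b m‖ / R ^ d m * C * (d m).factorial := by ring

lemma diffContOnCl_ball_zpow_mul {g : ℂ → ℂ} (hg : Differentiable ℂ g) (m : ℤ) {c : ℂ} {R : ℝ}
    (hR : R < ‖c‖) : DiffContOnCl ℂ (fun w => w ^ m * g w) (ball c R) := by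
  refine DifferentiableOn.diffContOnCl_ball (U := {0}ᶜ) (fun w hw => ?_) fun w hw => ?_
  · exact ((differentiableAt_zpow.mpr (Or.inl hw)).mul (hg w)).differentiableWithinAt
  · rintro rfl
    rw [mem_closedBall, dist_eq_norm, zero_sub, norm_neg] at hw
    exact hR.not_ge hw

lemma exp_mul_div_le_of_abs_sub_le {s t A v : ℝ} (hA : 0 < A) (hv : 0 ≤ v) (hv4 : v ≤ 1 / 4)
    (hs : |s - A| ≤ v * A / 2) (ht : |t * A - 1| ≤ v) :
    Real.exp (s * t) / s ≤ Real.exp 1 * t * Real.exp (6 * v) := by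
  obtain ⟨hs₁, hs₂⟩ := abs_le.mp hs
  obtain ⟨ht₁, ht₂⟩ := abs_le.mp ht
  have hs₀ : 0 < s := by nlinarith
  have ht₀ : 0 < t := by nlinarith
  -- `s * t = (s / A) * (t * A)`, a product of two factors within `v` of `1`
  have hst_le : s * t ≤ 1 + 2 * v := by nlinarith
  have hst_ge : 1 - 3 / 2 * v ≤ s * t := by
    have : (1 - 3 / 2 * v) * A ≤ s * t * A := by nlinarith
    exact le_of_mul_le_mul_right this hA
  have hst_exp : 1 ≤ s * t * Real.exp (4 * v) := by
    have h4 := Real.add_one_le_exp (4 * v)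
    nlinarith [mul_le_mul hst_ge h4 (by linarith) (by linarith)]
  calc Real.exp (s * t) / s ≤ Real.exp (1 + 2 * v) * (t * Real.exp (4 * v)) := by
        rw [div_eq_mul_inv]
        gcongr
        rw [inv_le_iff_one_le_mul₀ hs₀]
        linarith
    _ = Real.exp 1 * t * Real.exp (6 * v) := by
        rw [Real.exp_add, show 6 * v = 2 * v + 4 * v by ring, Real.exp_add]
        ring

lemma exp_norm_mul_div_norm_le {a' x w : ℂ} {δ ρ : ℝ} (ha' : a' ≠ 0) (hρ : ‖a'‖ ≤ ρ)
    (hδ : 0 ≤ δ) (hδρ : δ * ρ ≤ 1 / 4) (hx : ‖x - 1 / a'‖ ≤ δ)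
    (hw : ‖w - a'‖ ≤ δ * ρ * ‖a'‖ / 2) :
    Real.exp (‖w‖ * ‖x‖) / ‖w‖ ≤ Real.exp 1 * ‖x‖ * Real.exp (6 * (δ * ρ)) := by
  have hA : 0 < ‖a'‖ := norm_pos_iff.mpr ha'
  refine exp_mul_div_le_of_abs_sub_le hA (by nlinarith) hδρ ?_ ?_
  · exact (abs_norm_sub_norm_le w a').trans hw
  · calc |‖x‖ * ‖a'‖ - 1| = |‖x * a'‖ - ‖(1 : ℂ)‖| := by rw [norm_mul, norm_one]
      _ ≤ ‖(x - 1 / a') * a'‖ := by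
        rw [sub_mul, one_div, inv_mul_cancel₀ ha']
        exact abs_norm_sub_norm_le _ _
      _ ≤ δ * ρ := by
        rw [norm_mul]
        exact mul_le_mul hx hρ hA.le hδ

theorem stmt_15_general (a' : ℂ) (ha' : a' ≠ 0) (β : ℕ) (b : ℕ → ℂ)
    (ρ : ℝ) (hρ1 : ‖a'‖ ≤ ρ)
    (δ : ℝ) (hδ : 0 < δ) (hδρ : 2 * δ * ρ ≤ 1 / 2) :
    ∃ K > 0, ∀ n : ℕ, 1 ≤ n → ∀ x : ℂ, ‖x - 1 / a'‖ ≤ δ →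
      ‖∑ m ∈ Finset.Icc 1 β, (b m / (Nat.factorial (m - 1) : ℂ)) *
          iteratedDeriv (m - 1)
            (fun w : ℂ => w ^ (-(n : ℤ)) *
              ∑ k ∈ Finset.range n, ((n : ℂ) * w * x) ^ k / (Nat.factorial k : ℂ))
            a'‖ ≤
      K * ‖Complex.exp 1 * x‖ ^ n * Real.exp (6 * n * δ * ρ) := by
  have hA : 0 < ‖a'‖ := norm_pos_iff.mpr ha'
  set R := δ * ρ * ‖a'‖ / 2
  have hR : 0 < R := by have := hA.trans_le hρ1; positivity
  have hRA : R < ‖a'‖ := by simp only [R]; nlinarith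
  set K := ∑ m ∈ Icc 1 β, ‖b m‖ / R ^ (m - 1)
  refine ⟨K + 1, by positivity, fun n _ x hx => ?_⟩
  set f := fun w : ℂ => w ^ (-(n : ℤ)) *
    ∑ k ∈ Finset.range n, ((n : ℂ) * w * x) ^ k / (Nat.factorial k : ℂ)
  have hf : DiffContOnCl ℂ f (ball a' R) := diffContOnCl_ball_zpow_mul (by fun_prop) _ hRA
  have hC : ∀ w ∈ sphere a' R, ‖f w‖ ≤ ‖Complex.exp 1 * x‖ ^ n * Real.exp (6 * n * δ * ρ) := by
    intro w hw
    rw [mem_sphere_iff_norm] at hw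
    calc ‖f w‖ ≤ (Real.exp (‖w‖ * ‖x‖) / ‖w‖) ^ n := norm_zpow_neg_mul_sum_range_le n w x
      _ ≤ (Real.exp 1 * ‖x‖ * Real.exp (6 * (δ * ρ))) ^ n := by
        gcongr
        exact exp_norm_mul_div_norm_le ha' hρ1 hδ.le (by linarith) hx hw.le
      _ = ‖Complex.exp 1 * x‖ ^ n * Real.exp (6 * n * δ * ρ) := by
        rw [norm_mul, Complex.norm_exp, Complex.one_re, mul_pow, ← Real.exp_nat_mul]
        ring_nf
  calc _ ≤ K * (‖Complex.exp 1 * x‖ ^ n * Real.exp (6 * n * δ * ρ)) :=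
        norm_sum_mul_iteratedDeriv_div_factorial_le hR hf hC _ b (· - 1)
    _ ≤ (K + 1) * ‖Complex.exp 1 * x‖ ^ n * Real.exp (6 * n * δ * ρ) := by
        rw [mul_assoc (K + 1)]
        gcongr
        linarith

/-- Let `a' ≠ 0`, `β ≥ 1`, `b₁, …, b_β ∈ ℂ`, `ρ > 0` with
`|a'| ≤ ρ` and `1/|a'| ≤ ρ`, and `δ > 0` with `2δρ ≤ 1/2`. Set
`σₙ(x) = ∑_{m=1}^{β} (b_m/(m−1)!) ∂_w^{m−1}[w^{−n} S_{n−1}(nwx)]|_{w=a'}`. Then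
there is `K > 0` with `|σₙ(x)| ≤ K |ex|^n e^{6nδρ}` for all `n ≥ 1` and all `x`
with `|x − 1/a'| ≤ δ`. -/
theorem stmt_15 (a' : ℂ) (ha' : a' ≠ 0) (β : ℕ) (hβ : 1 ≤ β) (b : ℕ → ℂ)
    (ρ : ℝ) (hρ1 : ‖a'‖ ≤ ρ) (hρ2 : 1 / ‖a'‖ ≤ ρ)
    (δ : ℝ) (hδ : 0 < δ) (hδρ : 2 * δ * ρ ≤ 1 / 2) :
    ∃ K > 0, ∀ n : ℕ, 1 ≤ n → ∀ x : ℂ, ‖x - 1 / a'‖ ≤ δ →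
      ‖∑ m ∈ Finset.Icc 1 β, (b m / (Nat.factorial (m - 1) : ℂ)) *
          iteratedDeriv (m - 1)
            (fun w : ℂ => w ^ (-(n : ℤ)) *
              ∑ k ∈ Finset.range n, ((n : ℂ) * w * x) ^ k / (Nat.factorial k : ℂ))
            a'‖ ≤
      K * ‖Complex.exp 1 * x‖ ^ n * Real.exp (6 * n * δ * ρ) :=
  stmt_15_general a' ha' β b ρ hρ1 δ hδ hδρ
end

section
/- Let L be a closed line segment in ℂ with distinct endpoints z_1 and z_2, and let f be analytic on an open set containing L with f(z) ≠ 0 for every z ∈ L. Suppose the set {z ∈ L : Re f(z) = 0} is finite with cardinality ℓ. Then | Im ∫_{L} f′(z)/f(z) dz | ≤ (ℓ + 1) π, where the integral is taken along the segment from z_1 to z_2. -/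
/-!
Write `g t = f (z₁ + t (z₂ - z₁))`. Since `g` does not vanish, `g t = g 0 · exp (∫₀ᵗ g'/g)`, so
`φ t = arg (g 0) + Im ∫₀ᵗ g'/g` is a continuous argument of `g` and `Re g t = |g t| cos (φ t)`.
The quantity to bound is `|φ 1 - φ 0|`. By the intermediate value theorem `φ` attains every
zero `π/2 + kπ` of `cos` between `φ 0` and `φ 1`, each at a zero of `Re f` on the segment, and
an interval of length greater than `(ℓ + 1)π` contains at least `ℓ + 1` of them.
-/

open Set Real

theorem Real.sub_le_ncard_cos_eq_zero_add_one_mul_pi {m M : ℝ}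
    (hfin : {x ∈ Icc m M | cos x = 0}.Finite) :
    M - m ≤ ({x ∈ Icc m M | cos x = 0}.ncard + 1) * π := by
  set n := {x ∈ Icc m M | cos x = 0}.ncard
  by_contra! hlt
  -- `j₀ π + π / 2` is the least zero of `cos` in `[m, ∞)`
  set j₀ : ℤ := ⌈(m - π / 2) / π⌉
  have hj₀ : m ≤ j₀ * π + π / 2 ∧ j₀ * π + π / 2 < m + π := by
    have h₁ := Int.le_ceil ((m - π / 2) / π)
    have h₂ : (j₀ : ℝ) - 1 < (m - π / 2) / π := by
      linarith [Int.ceil_lt_add_one ((m - π / 2) / π)]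
    rw [div_le_iff₀ pi_pos] at h₁
    rw [lt_div_iff₀ pi_pos] at h₂
    constructor <;> linarith
  let x : Fin (n + 1) → ℝ := fun k => (j₀ + k) * π + π / 2
  have hx : Function.Injective x := fun k k' h => by
    simpa [x, pi_ne_zero, Fin.val_inj] using h
  have hxZ : range x ⊆ {x ∈ Icc m M | cos x = 0} := by
    rintro _ ⟨k, rfl⟩
    have hk : (k : ℝ) * π ≤ n * π := by
      gcongr; exact_mod_cast Nat.lt_succ_iff.mp k.2
    have hk₀ : 0 ≤ (k : ℝ) * π := by positivity
    refine ⟨⟨?_, ?_⟩, ?_⟩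
    · simp only [x, add_mul]; linarith
    · simp only [x, add_mul]; linarith
    · rw [cos_add_pi_div_two, neg_eq_zero]
      exact_mod_cast sin_int_mul_pi (j₀ + k)
  have := Set.ncard_le_ncard hxZ hfin
  rw [Set.ncard_range_of_injective hx, Nat.card_eq_fintype_card, Fintype.card_fin] at this
  omega

theorem Complex.re_mul_exp (w z : ℂ) :
    (w * Complex.exp z).re = ‖w‖ * Real.exp z.re * Real.cos (Complex.arg w + z.im) := by
  conv_lhs => rw [← Complex.norm_mul_exp_arg_mul_I w, mul_assoc, ← Complex.exp_add]
  rw [Complex.re_ofReal_mul, Complex.exp_re]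
  simp [mul_assoc]

theorem hasDerivWithinAt_integral_Icc {q : ℝ → ℂ} {a b t : ℝ} (hq : ContinuousOn q (Icc a b))
    (ht : t ∈ Icc a b) :
    HasDerivWithinAt (fun u => ∫ s in a..u, q s) (q t) (Icc a b) t := by
  have : Fact (t ∈ Icc a b) := ⟨ht⟩
  have hsub : uIcc a t ⊆ Icc a b := by
    rw [uIcc_of_le ht.1]; exact Icc_subset_Icc_right ht.2
  exact intervalIntegral.integral_hasDerivWithinAt_right
    ((hq.mono hsub).intervalIntegrable)
    (hq.stronglyMeasurableAtFilter_nhdsWithin measurableSet_Icc t) (hq t ht)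

theorem eq_mul_exp_integral_div_of_hasDerivAt {g g' : ℝ → ℂ} {a b : ℝ}
    (hg : ∀ t ∈ Icc a b, HasDerivAt g (g' t) t) (hg' : ContinuousOn g' (Icc a b))
    (hg0 : ∀ t ∈ Icc a b, g t ≠ 0) :
    ∀ t ∈ Icc a b, g t = g a * Complex.exp (∫ s in a..t, g' s / g s) := by
  set H := fun u => ∫ s in a..u, g' s / g s
  have hgc : ContinuousOn g (Icc a b) := fun t ht => (hg t ht).continuousAt.continuousWithinAt
  have hH : ∀ t ∈ Icc a b, HasDerivWithinAt H (g' t / g t) (Icc a b) t :=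
    fun t ht => hasDerivWithinAt_integral_Icc (hg'.div hgc hg0) ht
  have hderiv : ∀ t ∈ Icc a b,
      HasDerivWithinAt (fun u => g u * Complex.exp (-H u)) 0 (Icc a b) t := by
    intro t ht
    have h : HasDerivWithinAt (fun u => g u * Complex.exp (-H u))
        (g' t * Complex.exp (-H t) + g t * (Complex.exp (-H t) * -(g' t / g t))) (Icc a b) t :=
      (hg t ht).hasDerivWithinAt.mul (hH t ht).neg.cexp
    convert h using 1
    field_simp [hg0 t ht]
    ring
  have hconst := constant_of_has_deriv_right_zero
    (fun t ht => (hderiv t ht).continuousWithinAt)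
    (fun t ht => (hderiv t (Ico_subset_Icc_self ht)).mono_of_mem_nhdsWithin
      (Icc_mem_nhdsGE_of_mem ht))
  intro t ht
  have h := hconst t ht
  simp only [H, intervalIntegral.integral_same, neg_zero, Complex.exp_zero, mul_one] at h
  rw [← h, mul_assoc, ← Complex.exp_add, neg_add_cancel, Complex.exp_zero, mul_one]

theorem ContinuousOn.abs_sub_le_ncard_cos_eq_zero_add_one_mul_pi {φ : ℝ → ℝ} {a b : ℝ}
    (hab : a ≤ b) (hφ : ContinuousOn φ (Icc a b))
    (hfin : {t ∈ Icc a b | cos (φ t) = 0}.Finite) :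
    |φ b - φ a| ≤ ({t ∈ Icc a b | cos (φ t) = 0}.ncard + 1) * π := by
  set T := {t ∈ Icc a b | cos (φ t) = 0}
  have hZ : {x ∈ Icc (min (φ a) (φ b)) (max (φ a) (φ b)) | cos x = 0} ⊆ φ '' T := by
    rintro x ⟨hx, hcos⟩
    rw [Icc_min_max] at hx
    rw [← uIcc_of_le hab] at hφ
    obtain ⟨t, ht, rfl⟩ := intermediate_value_uIcc hφ hx
    exact ⟨t, ⟨uIcc_of_le hab ▸ ht, hcos⟩, rfl⟩
  have hZfin := (hfin.image φ).subset hZ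
  calc |φ b - φ a| = max (φ a) (φ b) - min (φ a) (φ b) := by rw [max_sub_min_eq_abs]
    _ ≤ _ := Real.sub_le_ncard_cos_eq_zero_add_one_mul_pi hZfin
    _ ≤ (T.ncard + 1) * π := by
      have := (Set.ncard_le_ncard hZ (hfin.image φ)).trans (Set.ncard_image_le hfin)
      gcongr

theorem abs_im_integral_deriv_div_le {g g' : ℝ → ℂ} {a b : ℝ} (hab : a ≤ b)
    (hg : ∀ t ∈ Icc a b, HasDerivAt g (g' t) t) (hg' : ContinuousOn g' (Icc a b))
    (hg0 : ∀ t ∈ Icc a b, g t ≠ 0) (hfin : {t ∈ Icc a b | (g t).re = 0}.Finite) :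
    |(∫ t in a..b, g' t / g t).im| ≤ ({t ∈ Icc a b | (g t).re = 0}.ncard + 1) * π := by
  set H := fun u => ∫ s in a..u, g' s / g s
  -- `φ` is a continuous argument of `g` along `[a, b]`
  set φ := fun t => Complex.arg (g a) + (H t).im
  have hre : ∀ t ∈ Icc a b, (g t).re = ‖g a‖ * Real.exp (H t).re * cos (φ t) := fun t ht => by
    rw [eq_mul_exp_integral_div_of_hasDerivAt hg hg' hg0 t ht, Complex.re_mul_exp]
  have hzeros : {t ∈ Icc a b | cos (φ t) = 0} = {t ∈ Icc a b | (g t).re = 0} := by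
    ext t
    refine and_congr_right fun ht => ?_
    have : ‖g a‖ * Real.exp (H t).re ≠ 0 := by
      have := hg0 a (left_mem_Icc.mpr hab)
      positivity
    rw [hre t ht, mul_eq_zero, or_iff_right this]
  have hgc : ContinuousOn g (Icc a b) := fun t ht => (hg t ht).continuousAt.continuousWithinAt
  have hφ : ContinuousOn φ (Icc a b) := fun t ht =>
    (Complex.continuous_im.continuousAt.comp_continuousWithinAt
      (hasDerivWithinAt_integral_Icc (hg'.div hgc hg0) ht).continuousWithinAt).const_add _
  have := hφ.abs_sub_le_ncard_cos_eq_zero_add_one_mul_pi hab (hzeros ▸ hfin)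
  have hHa : H a = 0 := intervalIntegral.integral_same
  rwa [hzeros, add_sub_add_left_eq_sub, hHa, Complex.zero_im, sub_zero] at this

/-- Backlund-type estimate: let `L` be the closed segment from `z₁`
to `z₂` (`z₁ ≠ z₂`), `f` analytic and nonvanishing on an open set containing `L`,
and suppose `{z ∈ L : Re f(z) = 0}` is finite with `ℓ` elements. Then
`|Im ∫_L f′(z)/f(z) dz| ≤ (ℓ + 1)π`, the integral being taken along the segment
from `z₁` to `z₂`. -/
theorem stmt_18 (z1 z2 : ℂ) (hz : z1 ≠ z2) (f : ℂ → ℂ) (U : Set ℂ)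
    (hU : IsOpen U) (hLU : segment ℝ z1 z2 ⊆ U)
    (hf : DifferentiableOn ℂ f U)
    (hne : ∀ z ∈ segment ℝ z1 z2, f z ≠ 0)
    (ℓ : ℕ) (hfin : {z ∈ segment ℝ z1 z2 | (f z).re = 0}.Finite)
    (hcard : {z ∈ segment ℝ z1 z2 | (f z).re = 0}.ncard = ℓ) :
    |(∫ t in (0:ℝ)..1,
        deriv f (z1 + (t : ℂ) * (z2 - z1)) / f (z1 + (t : ℂ) * (z2 - z1)) *
          (z2 - z1)).im| ≤ (ℓ + 1) * Real.pi := by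
  set c := z2 - z1
  set γ : ℝ → ℂ := fun t => z1 + (t : ℂ) * c
  have hγL : ∀ t ∈ Icc (0 : ℝ) 1, γ t ∈ segment ℝ z1 z2 := fun t ht => by
    rw [segment_eq_image']
    exact ⟨t, ht, by simp [γ, c, Complex.real_smul]⟩
  have hγ : Function.Injective γ := fun s t h => by
    simpa [γ, c, sub_ne_zero.mpr hz.symm] using h
  have hfγ : ∀ t ∈ Icc (0 : ℝ) 1, HasDerivAt (fun t => f (γ t)) (deriv f (γ t) * c) t :=
    fun t ht => (hf.differentiableAt (hU.mem_nhds (hLU (hγL t ht)))).hasDerivAt.comp t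
      (((hasDerivAt_id t).ofReal_comp.mul_const c).const_add z1 |>.congr_deriv (one_mul c))
  have hcont : ContinuousOn (fun t => deriv f (γ t) * c) (Icc 0 1) :=
    ((hf.analyticOnNhd hU).deriv.continuousOn.comp (by fun_prop) fun t ht => hLU (hγL t ht)).mul
      continuousOn_const
  set T := {t ∈ Icc (0 : ℝ) 1 | (f (γ t)).re = 0}
  have hT : ∀ t ∈ T, γ t ∈ {z ∈ segment ℝ z1 z2 | (f z).re = 0} := fun t ht => ⟨hγL t ht.1, ht.2⟩
  have hTcard : T.ncard ≤ ℓ := hcard ▸ Set.ncard_le_ncard_of_injOn γ hT hγ.injOn hfin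
  have key := abs_im_integral_deriv_div_le zero_le_one hfγ hcont (fun t ht => hne _ (hγL t ht))
    ((hfin.preimage hγ.injOn).subset hT)
  simp_rw [mul_div_right_comm] at key
  calc _ ≤ (T.ncard + 1) * π := key
    _ ≤ (ℓ + 1) * π := by gcongr
end
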